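/- arXiv:1803.07468 — 9 statements merged into one kernel-verified Lean document; each statement's English description precedes it below -/
import Mathlib

section
/- Let D and N be positive integers with N ≥ D and N ≥ 2, and let φ_1,…,φ_N be nonzero vectors in ℂ^D. Then max over all pairs n ≠ n' of |⟨φ_n, φ_{n'}⟩| / (‖φ_n‖·‖φ_{n'}‖) is at least sqrt((N−D)/(D(N−1))). -/
/-!
Normalize the vectors to unit vectors `ψ n`; the normalized inner products are unchanged.
The frame potential `∑ n m, |⟪ψ n, ψ m⟫|²` equals the squared Frobenius norm of the frame
matrix `F = ∑ n, ψ n ψ nᴴ`, whose trace is `N`; Cauchy–Schwarz on the diagonal of `F` gives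
`N² ≤ D · ∑ n m, |⟪ψ n, ψ m⟫|²`. Bounding the `N` diagonal terms by `1` and the `N (N - 1)`
off-diagonal ones by the largest coherence `M²` yields `N² ≤ D (N + N (N - 1) M²)`.
-/

open Finset ComplexConjugate
open scoped InnerProductSpace

variable {𝕜 : Type*} [RCLike 𝕜] {ι κ : Type*} [Fintype ι] [Fintype κ]

noncomputable def frameMatrix (v : ι → EuclideanSpace 𝕜 κ) : Matrix κ κ 𝕜 :=
  Matrix.of fun i j => ∑ n, v n i * conj (v n j)

theorem sum_norm_inner_sq_eq_sum_norm_frameMatrix_sq (v : ι → EuclideanSpace 𝕜 κ) :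
    ∑ n, ∑ m, ‖⟪v n, v m⟫_𝕜‖ ^ 2 = ∑ i, ∑ j, ‖frameMatrix v i j‖ ^ 2 := by
  apply RCLike.ofReal_injective (K := 𝕜)
  push_cast
  simp only [frameMatrix, Matrix.of_apply, ← RCLike.mul_conj, PiLp.inner_apply,
    RCLike.inner_apply, map_sum, map_mul, RCLike.conj_conj, sum_mul_sum]
  conv_rhs => rw [sum_comm]
  simp_rw [sum_comm (s := (univ : Finset κ)) (t := (univ : Finset ι))]
  exact sum_congr rfl fun n _ => sum_congr rfl fun m _ => sum_congr rfl fun i _ =>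
    sum_congr rfl fun j _ => by ring

theorem trace_frameMatrix (v : ι → EuclideanSpace 𝕜 κ) :
    (frameMatrix v).trace = ((∑ n, ‖v n‖ ^ 2 : ℝ) : 𝕜) := by
  simp only [Matrix.trace, Matrix.diag, frameMatrix, Matrix.of_apply, RCLike.mul_conj,
    EuclideanSpace.norm_sq_eq]
  push_cast
  exact sum_comm

theorem sq_sum_norm_sq_le_card_mul_sum_norm_inner_sq (v : ι → EuclideanSpace 𝕜 κ) :
    (∑ n, ‖v n‖ ^ 2) ^ 2 ≤ Fintype.card κ * ∑ n, ∑ m, ‖⟪v n, v m⟫_𝕜‖ ^ 2 := by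
  set F := frameMatrix v
  calc (∑ n, ‖v n‖ ^ 2) ^ 2 = ‖F.trace‖ ^ 2 := by
        rw [trace_frameMatrix, RCLike.norm_ofReal,
          abs_of_nonneg (sum_nonneg fun n _ => sq_nonneg _)]
    _ ≤ (∑ i, ‖F i i‖) ^ 2 := by gcongr; exact norm_sum_le _ _
    _ ≤ Fintype.card κ * ∑ i, ‖F i i‖ ^ 2 := sq_sum_le_card_mul_sum_sq
    _ ≤ Fintype.card κ * ∑ i, ∑ j, ‖F i j‖ ^ 2 := by
        gcongr with i
        exact single_le_sum (f := fun j => ‖F i j‖ ^ 2) (fun j _ => sq_nonneg _) (mem_univ i)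
    _ = Fintype.card κ * ∑ n, ∑ m, ‖⟪v n, v m⟫_𝕜‖ ^ 2 := by
        rw [sum_norm_inner_sq_eq_sum_norm_frameMatrix_sq]

section Coherence

variable {E : Type*} [NormedAddCommGroup E] [InnerProductSpace 𝕜 E]

theorem norm_inner_inv_norm_smul (x y : E) :
    ‖⟪(‖x‖⁻¹ : 𝕜) • x, (‖y‖⁻¹ : 𝕜) • y⟫_𝕜‖ = ‖⟪x, y⟫_𝕜‖ / (‖x‖ * ‖y‖) := by
  rw [inner_smul_left, inner_smul_right, norm_mul, norm_mul, RCLike.norm_conj, norm_inv,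
    norm_inv, RCLike.norm_ofReal, RCLike.norm_ofReal, abs_norm, abs_norm]
  field_simp

theorem sum_norm_inner_sq_le_of_norm_eq_one {ψ : ι → E} (hψ : ∀ n, ‖ψ n‖ = 1) {M : ℝ}
    (hM : ∀ n m, n ≠ m → ‖⟪ψ n, ψ m⟫_𝕜‖ ≤ M) :
    ∑ n, ∑ m, ‖⟪ψ n, ψ m⟫_𝕜‖ ^ 2 ≤
      Fintype.card ι + Fintype.card ι * (Fintype.card ι - 1) * M ^ 2 := by
  classical
  have hrow : ∀ n, ∑ m, ‖⟪ψ n, ψ m⟫_𝕜‖ ^ 2 ≤ 1 + (Fintype.card ι - 1) * M ^ 2 := fun n => by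
    have hoff : ∑ m ∈ univ.erase n, ‖⟪ψ n, ψ m⟫_𝕜‖ ^ 2 ≤ (Fintype.card ι - 1) * M ^ 2 := by
      have hcard : ((univ.erase n).card : ℝ) = Fintype.card ι - 1 := by
        rw [card_erase_of_mem (mem_univ n), card_univ,
          Nat.cast_pred (Fintype.card_pos_iff.2 ⟨n⟩)]
      rw [← hcard, ← nsmul_eq_mul]
      refine sum_le_card_nsmul _ _ _ fun m hm => ?_
      exact pow_le_pow_left₀ (norm_nonneg _) (hM n m (ne_of_mem_erase hm).symm) 2
    rw [← add_sum_erase _ _ (mem_univ n), inner_self_eq_norm_sq_to_K, hψ n]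
    simpa using hoff
  calc ∑ n, ∑ m, ‖⟪ψ n, ψ m⟫_𝕜‖ ^ 2 ≤ ∑ _n : ι, (1 + (Fintype.card ι - 1) * M ^ 2) :=
        sum_le_sum fun n _ => hrow n
    _ = _ := by rw [sum_const, card_univ, nsmul_eq_mul]; ring

end Coherence

theorem exists_ne_card_sub_le_mul_norm_inner_sq [Nontrivial ι] {ψ : ι → EuclideanSpace 𝕜 κ}
    (hψ : ∀ n, ‖ψ n‖ = 1) :
    ∃ n m, n ≠ m ∧ (Fintype.card ι - Fintype.card κ : ℝ) ≤
      Fintype.card κ * (Fintype.card ι - 1) * ‖⟪ψ n, ψ m⟫_𝕜‖ ^ 2 := by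
  set N : ℝ := (Fintype.card ι : ℝ)
  set D : ℝ := (Fintype.card κ : ℝ)
  obtain ⟨a, b, hab⟩ := exists_pair_ne ι
  obtain ⟨⟨n, m⟩, hnm, hmax⟩ := (univ : Finset ι).offDiag.exists_max_image
    (fun p => ‖⟪ψ p.1, ψ p.2⟫_𝕜‖) ⟨(a, b), by simpa using hab⟩
  set M := ‖⟪ψ n, ψ m⟫_𝕜‖
  refine ⟨n, m, (mem_offDiag.1 hnm).2.2, ?_⟩
  have hlower := sq_sum_norm_sq_le_card_mul_sum_norm_inner_sq ψ
  have hupper := sum_norm_inner_sq_le_of_norm_eq_one hψ (M := M) fun n' m' h =>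
    hmax (n', m') (by simpa using h)
  simp only [hψ, one_pow, sum_const, card_univ, nsmul_eq_mul, mul_one] at hlower
  have hN : 0 < N := Nat.cast_pos.2 Fintype.card_pos
  have hscaled : N * (N - D) ≤ N * (D * (N - 1) * M ^ 2) := by
    calc N * (N - D) = N ^ 2 - D * N := by ring
      _ ≤ D * (N + N * (N - 1) * M ^ 2) - D * N := by gcongr; exact hlower.trans (by gcongr)
      _ = N * (D * (N - 1) * M ^ 2) := by ring
  exact le_of_mul_le_mul_left hscaled hN

theorem welch_bound_general (D N : ℕ) (hN : 2 ≤ N)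
    (φ : Fin N → EuclideanSpace ℂ (Fin D)) (hφ : ∀ n, φ n ≠ 0) :
    ∃ n n' : Fin N, n ≠ n' ∧
      Real.sqrt (((N : ℝ) - D) / (D * ((N : ℝ) - 1))) ≤
        ‖(inner ℂ (φ n) (φ n') : ℂ)‖ / (‖φ n‖ * ‖φ n'‖) := by
  have : Nontrivial (Fin N) := Fin.nontrivial_iff_two_le.2 hN
  obtain ⟨n, n', hne, hwelch⟩ := exists_ne_card_sub_le_mul_norm_inner_sq
    fun n => norm_smul_inv_norm (𝕜 := ℂ) (hφ n)
  rw [Fintype.card_fin, Fintype.card_fin, norm_inner_inv_norm_smul] at hwelch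
  have hN1 : (0 : ℝ) ≤ N - 1 := by
    rw [sub_nonneg]; exact_mod_cast (by omega : 1 ≤ N)
  refine ⟨n, n', hne, Real.sqrt_le_iff.2 ⟨by positivity, ?_⟩⟩
  exact div_le_of_le_mul₀ (by positivity) (sq_nonneg _) (by linarith)

/-- **Welch bound.** Any `N` nonzero vectors in `ℂ^D` (with `N ≥ D`, `N ≥ 2`) have a pair
whose normalized inner product modulus is at least `sqrt((N-D)/(D(N-1)))`. -/
theorem welch_bound (D N : ℕ) (hD : 0 < D) (hN : 2 ≤ N) (hDN : D ≤ N)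
    (φ : Fin N → EuclideanSpace ℂ (Fin D)) (hφ : ∀ n, φ n ≠ 0) :
    ∃ n n' : Fin N, n ≠ n' ∧
      Real.sqrt (((N : ℝ) - D) / (D * ((N : ℝ) - 1))) ≤
        ‖(inner ℂ (φ n) (φ n') : ℂ)‖ / (‖φ n‖ * ‖φ n'‖) :=
  welch_bound_general D N hN φ hφ
end

section
/- Let D and N be positive integers with N > D ≥ 1, and let φ_1,…,φ_N be nonzero vectors in ℂ^D all having the same norm C^{1/2}, i.e. ‖φ_n‖² = C for all n. Then equality holds in the Welch bound, i.e. max_{n≠n'} |⟨φ_n, φ_{n'}⟩| = C·sqrt((N−D)/(D(N−1))), if and only if the vectors form an equiangular tight frame for ℂ^D, i.e. there exists A > 0 with Φ Φ* = A·I (where Φ is the D×N matrix whose n-th column is φ_n and Φ* its conjugate transpose), and |⟨φ_n, φ_{n'}⟩| takes a single constant value over all pairs n ≠ n'. -/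
/-!
Let `Φ` be the synthesis matrix and `G = Φᴴ Φ` the Gram matrix, and write `‖·‖_F` for the
Frobenius norm. Cyclicity of the trace gives `‖Φ Φᴴ - (N C / D) • 1‖_F² = ‖G‖_F² - (N C)² / D`,
while `‖G‖_F² = N C² + ∑_{n ≠ n'} |⟪φ n, φ n'⟫|²`. So the `N (N - 1)` squared off-diagonal
inner products have sum at least `N (N - 1)` times the square of the Welch bound. The maximum
attains the bound exactly when all of them equal it, i.e. when the vectors are equiangular and
their sum equals its lower bound; the latter says `Φ Φᴴ = (N C / D) • 1`, i.e. tightness.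
-/

open Matrix RCLike

namespace Matrix

variable {𝕜 : Type*} [RCLike 𝕜] {m n : Type*} [Fintype m] [Fintype n]

theorem sum_norm_sq_eq_re_trace_mul_conjTranspose (M : Matrix m n 𝕜) :
    ∑ i, ∑ j, ‖M i j‖ ^ 2 = re (M * Mᴴ).trace := by
  simp [trace, mul_apply, RCLike.mul_conj]

theorem sum_norm_sq_eq_zero_iff (M : Matrix m n 𝕜) : ∑ i, ∑ j, ‖M i j‖ ^ 2 = 0 ↔ M = 0 := by
  rw [Finset.sum_eq_zero_iff_of_nonneg fun i _ => by positivity, ← Matrix.ext_iff]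
  simp [Finset.sum_eq_zero_iff_of_nonneg]

theorem sum_norm_sq_mul_conjTranspose_self (Φ : Matrix m n 𝕜) :
    ∑ i, ∑ j, ‖(Φ * Φᴴ) i j‖ ^ 2 = ∑ k, ∑ l, ‖(Φᴴ * Φ) k l‖ ^ 2 := by
  simp only [sum_norm_sq_eq_re_trace_mul_conjTranspose, conjTranspose_mul,
    conjTranspose_conjTranspose]
  rw [← Matrix.mul_assoc, trace_mul_comm, ← Matrix.mul_assoc, ← Matrix.mul_assoc, Matrix.mul_assoc]

theorem sum_norm_sq_sub_smul_one [DecidableEq m] (T : Matrix m m 𝕜) (c : ℝ) :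
    ∑ i, ∑ j, ‖(T - (c : 𝕜) • 1) i j‖ ^ 2
      = ∑ i, ∑ j, ‖T i j‖ ^ 2 - 2 * c * re T.trace + c ^ 2 * Fintype.card m := by
  simp only [sum_norm_sq_eq_re_trace_mul_conjTranspose, conjTranspose_sub, conjTranspose_smul,
    conjTranspose_one, sub_mul, mul_sub, smul_mul, Matrix.one_mul, trace_sub, trace_smul,
    trace_conjTranspose, trace_one, map_sub, smul_eq_mul, star_def, conj_ofReal]
  simp [smul_re]
  ring

section Frame

variable [Nonempty m] [DecidableEq m]

theorem sum_norm_sq_mul_conjTranspose_sub_smul_one (Φ : Matrix m n 𝕜) :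
    ∑ i, ∑ j, ‖(Φ * Φᴴ - ((re (Φ * Φᴴ).trace / Fintype.card m : ℝ) : 𝕜) •
        (1 : Matrix m m 𝕜)) i j‖ ^ 2
      = ∑ k, ∑ l, ‖(Φᴴ * Φ) k l‖ ^ 2 - re (Φ * Φᴴ).trace ^ 2 / Fintype.card m := by
  rw [sum_norm_sq_sub_smul_one, sum_norm_sq_mul_conjTranspose_self]
  field_simp
  ring

theorem sq_re_trace_div_card_le_sum_norm_sq (Φ : Matrix m n 𝕜) :
    re (Φ * Φᴴ).trace ^ 2 / Fintype.card m ≤ ∑ k, ∑ l, ‖(Φᴴ * Φ) k l‖ ^ 2 :=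
  sub_nonneg.1 <| sum_norm_sq_mul_conjTranspose_sub_smul_one Φ ▸ by positivity

theorem exists_pos_mul_conjTranspose_eq_smul_one_iff {Φ : Matrix m n 𝕜}
    (ht : 0 < re (Φ * Φᴴ).trace) :
    (∃ A : ℝ, 0 < A ∧ Φ * Φᴴ = (A : 𝕜) • 1)
      ↔ ∑ k, ∑ l, ‖(Φᴴ * Φ) k l‖ ^ 2 = re (Φ * Φᴴ).trace ^ 2 / Fintype.card m := by
  rw [← sub_eq_zero, ← sum_norm_sq_mul_conjTranspose_sub_smul_one, sum_norm_sq_eq_zero_iff,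
    sub_eq_zero]
  constructor
  · rintro ⟨A, -, hA⟩
    have hcard : (Fintype.card m : ℝ) ≠ 0 := by positivity
    rw [hA, trace_smul, trace_one, smul_eq_mul, ← ofReal_natCast, ← ofReal_mul, ofReal_re,
      mul_div_cancel_right₀ _ hcard]
  · exact fun h => ⟨_, by positivity, h⟩

end Frame

theorem re_trace_mul_conjTranspose_of_eq_sum_norm_sq (φ : n → EuclideanSpace 𝕜 m) :
    re ((of fun i j => φ j i) * (of fun i j => φ j i)ᴴ).trace = ∑ j, ‖φ j‖ ^ 2 := by
  rw [← sum_norm_sq_eq_re_trace_mul_conjTranspose, Finset.sum_comm]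
  simp [EuclideanSpace.norm_sq_eq]

end Matrix

namespace Fintype

variable {α : Type*} [Fintype α] [DecidableEq α]

theorem sum_offDiag_eq_sub {M : Type*} [AddCommGroup M] (g : α → α → M) :
    ∑ p : {p : α × α // p.1 ≠ p.2}, g p.1.1 p.1.2 = ∑ a, ∑ b, g a b - ∑ a, g a a := by
  rw [eq_sub_iff_add_eq, ← Finset.sum_subtype Finset.univ.offDiag (by simp)
    (fun p : α × α => g p.1 p.2), add_comm,
    ← Finset.sum_diag (f := fun p : α × α => g p.1 p.2),
    ← Finset.sum_union (Finset.disjoint_diag_offDiag _), Finset.diag_union_offDiag,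
    Finset.univ_product_univ, Fintype.sum_prod_type]

theorem card_offDiag_subtype :
    (card {p : α × α // p.1 ≠ p.2} : ℝ) = card α * (card α - 1) := by
  have h := sum_offDiag_eq_sub fun _ _ : α => (1 : ℝ)
  simp only [Finset.sum_const, Finset.card_univ, nsmul_eq_mul, mul_one] at h
  linarith

end Fintype

theorem ciSup_eq_iff_of_card_mul_sq_le_sum_sq {ι : Type*} [Fintype ι] [Nonempty ι] {f : ι → ℝ}
    (hf : ∀ i, 0 ≤ f i) {B : ℝ} (hB : 0 ≤ B) (hsum : Fintype.card ι * B ^ 2 ≤ ∑ i, f i ^ 2) :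
    ⨆ i, f i = B ↔ ∑ i, f i ^ 2 = Fintype.card ι * B ^ 2 ∧ ∃ μ, ∀ i, f i = μ := by
  have hconst {μ : ℝ} (h : ∀ i, f i = μ) : ∑ i, f i ^ 2 = Fintype.card ι * μ ^ 2 := by simp [h]
  constructor
  · intro hsup
    have hle (i : ι) : f i ^ 2 ≤ B ^ 2 := by
      gcongr
      exacts [hf i, hsup ▸ le_ciSup (Set.finite_range f).bddAbove i]
    have hsum_le : ∑ i, f i ^ 2 ≤ ∑ _i : ι, B ^ 2 := Finset.sum_le_sum fun i _ => hle i
    have hsq : ∀ i, f i ^ 2 = B ^ 2 := by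
      refine fun i => (Finset.sum_eq_sum_iff_of_le fun i _ => hle i).1 ?_ i (Finset.mem_univ i)
      simp only [Finset.sum_const, Finset.card_univ, nsmul_eq_mul] at hsum_le ⊢
      linarith
    have hB' : ∀ i, f i = B := fun i => (sq_eq_sq₀ (hf i) hB).1 (hsq i)
    exact ⟨hconst hB', B, hB'⟩
  · rintro ⟨hsum_eq, μ, hμ⟩
    obtain ⟨i₀⟩ := ‹Nonempty ι›
    have hμB : μ = B := by
      have hcard : (0 : ℝ) < Fintype.card ι := by exact_mod_cast Fintype.card_pos
      rw [hconst hμ] at hsum_eq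
      exact (sq_eq_sq₀ (hμ i₀ ▸ hf i₀) hB).1 (mul_left_cancel₀ hcard.ne' hsum_eq)
    simp [hμ, hμB]

theorem mul_sub_one_mul_sq_welch_eq {d n : ℝ} (hd : 0 < d) (hdn : d ≤ n) (hn : 1 < n) (C : ℝ) :
    n * (n - 1) * (C * √((n - d) / (d * (n - 1)))) ^ 2 = (n * C) ^ 2 / d - n * C ^ 2 := by
  have hn1 : n - 1 ≠ 0 := by linarith
  rw [mul_pow, Real.sq_sqrt (div_nonneg (by linarith) (by nlinarith))]
  field_simp

/-- Nonzero equal-norm vectors achieve equality in the Welch bound if and only if they form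
an equiangular tight frame for `ℂ^D`. -/
theorem welch_equality_iff_etf (D N : ℕ) (hD : 1 ≤ D) (hDN : D < N)
    (φ : Fin N → EuclideanSpace ℂ (Fin D)) (hφ : ∀ n, φ n ≠ 0)
    (C : ℝ) (hC : ∀ n, ‖φ n‖ ^ 2 = C)
    (Φ : Matrix (Fin D) (Fin N) ℂ) (hΦ : ∀ d n, Φ d n = φ n d) :
    (⨆ p : {p : Fin N × Fin N // p.1 ≠ p.2}, ‖(inner ℂ (φ p.1.1) (φ p.1.2) : ℂ)‖)
        = C * Real.sqrt (((N : ℝ) - D) / (D * ((N : ℝ) - 1))) ↔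
      ((∃ A : ℝ, 0 < A ∧ Φ * Φᴴ = (A : ℂ) • (1 : Matrix (Fin D) (Fin D) ℂ)) ∧
        (∃ μ : ℝ, ∀ n n' : Fin N, n ≠ n' → ‖(inner ℂ (φ n) (φ n') : ℂ)‖ = μ)) := by
  have : Nonempty (Fin D) := ⟨⟨0, hD⟩⟩
  have : Nonempty {p : Fin N × Fin N // p.1 ≠ p.2} :=
    ⟨⟨(⟨0, by omega⟩, ⟨1, by omega⟩), by simp [Fin.ext_iff]⟩⟩
  have hΦ' : Φ = of fun d n => φ n d := by ext; simp [hΦ]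
  have hC0 : 0 < C := hC ⟨0, by omega⟩ ▸ pow_pos (norm_pos_iff.2 (hφ _)) 2
  have htrace : re (Φ * Φᴴ).trace = N * C := by
    simp [hΦ', re_trace_mul_conjTranspose_of_eq_sum_norm_sq, hC]
  have hoff : ∑ p : {p : Fin N × Fin N // p.1 ≠ p.2}, ‖(inner ℂ (φ p.1.1) (φ p.1.2) : ℂ)‖ ^ 2
      = ∑ k, ∑ l, ‖gram ℂ φ k l‖ ^ 2 - N * C ^ 2 := by
    simp [Fintype.sum_offDiag_eq_sub fun n n' => ‖(inner ℂ (φ n) (φ n') : ℂ)‖ ^ 2, gram_apply, hC]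
  have hG : Φᴴ * Φ = gram ℂ φ :=
    hΦ' ▸ (gram_eq_conjTranspose_mul (EuclideanSpace.basisFun _ ℂ) φ).symm
  have hwelch : (Fintype.card {p : Fin N × Fin N // p.1 ≠ p.2} : ℝ)
      * (C * √(((N : ℝ) - D) / (D * ((N : ℝ) - 1)))) ^ 2 = (N * C) ^ 2 / D - N * C ^ 2 := by
    rw [Fintype.card_offDiag_subtype, Fintype.card_fin]
    exact mul_sub_one_mul_sq_welch_eq (by positivity) (by exact_mod_cast hDN.le)
      (by exact_mod_cast (by omega : 1 < N)) C
  have hbound := sq_re_trace_div_card_le_sum_norm_sq Φ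
  have htight := exists_pos_mul_conjTranspose_eq_smul_one_iff (Φ := Φ)
    (htrace ▸ mul_pos (by exact_mod_cast (by omega : 0 < N)) hC0)
  rw [hG, htrace, Fintype.card_fin] at hbound htight
  rw [ciSup_eq_iff_of_card_mul_sq_le_sum_sq (fun _ => norm_nonneg _) (by positivity)
    (by linarith), hoff, hwelch, sub_left_inj, ← htight]
  -- `htight` mentions `(A : ℂ)` as `RCLike.ofReal A`, which is only defeq to `Complex.ofReal A`
  exact and_congr Iff.rfl (by simp only [Subtype.forall, Prod.forall])
end

section
/- Let K, M, U, P, V be positive integers with K ≥ 2. Suppose there exists an incidence matrix of a K-GDD of type M^U and an incidence matrix of a U-GDD of type P^V. Then there exists an incidence matrix of a K-GDD of type (MP)^V. -/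
open Matrix

/-- `X` is a `{0,1}` incidence matrix of a `K`-GDD whose groups are indexed by `G`,
each group consisting of the points indexed by `P`, with replication number `R`:
every row sums to `K` and `Xᵀ X = R·I + (J - I) ⊗ J`. -/
def IsGDDIncidence (K R : ℕ) {ι G P : Type*} [Fintype ι] [Fintype G] [Fintype P]
    [DecidableEq G] [DecidableEq P] (X : Matrix ι (G × P) ℤ) : Prop :=
  (∀ b v, X b v = 0 ∨ X b v = 1) ∧
  (∀ b, ∑ v, X b v = (K : ℤ)) ∧
  Xᵀ * X = (R : ℤ) • (1 : Matrix (G × P) (G × P) ℤ) +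
    Matrix.kroneckerMap (· * ·)
      (Matrix.of (fun _ _ => (1 : ℤ)) - (1 : Matrix G G ℤ))
      (Matrix.of (fun _ _ => (1 : ℤ)) : Matrix P P ℤ)

/-- Existence of (an incidence matrix of) a `K`-GDD of type `M^U`; here `U ≥ K`, the
replication number is `R = M(U-1)/(K-1)` and the number of blocks is
`B = M²U(U-1)/(K(K-1))`. -/
def GDDExists (K M U : ℕ) : Prop :=
  K ≤ U ∧
  ∃ (B R : ℕ) (X : Matrix (Fin B) (Fin U × Fin M) ℤ),
    R * (K - 1) = M * (U - 1) ∧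
    B * (K * (K - 1)) = M ^ 2 * U * (U - 1) ∧
    IsGDDIncidence K R X

private lemma gram_iff' (R : ℕ) {ι G P : Type*} [Fintype ι] [Fintype G] [Fintype P]
    [DecidableEq G] [DecidableEq P] (X : Matrix ι (G × P) ℤ) :
    (Xᵀ * X = (R : ℤ) • (1 : Matrix (G × P) (G × P) ℤ) +
      Matrix.kroneckerMap (· * ·)
        (Matrix.of (fun _ _ => (1 : ℤ)) - (1 : Matrix G G ℤ))
        (Matrix.of (fun _ _ => (1 : ℤ)) : Matrix P P ℤ)) ↔
    (∀ c c' : G × P, ∑ b, X b c * X b c' =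
      (if c = c' then (R : ℤ) else 0) + (if c.1 = c'.1 then 0 else 1)) := by
  rw [← Matrix.ext_iff]
  apply forall_congr'
  intro c
  apply forall_congr'
  intro c'
  have hL : (Xᵀ * X) c c' = ∑ b, X b c * X b c' := by
    simp [Matrix.mul_apply, Matrix.transpose_apply]
  have hR : ((R : ℤ) • (1 : Matrix (G × P) (G × P) ℤ) +
      Matrix.kroneckerMap (· * ·)
        (Matrix.of (fun _ _ => (1 : ℤ)) - (1 : Matrix G G ℤ))
        (Matrix.of (fun _ _ => (1 : ℤ)) : Matrix P P ℤ) : Matrix (G × P) (G × P) ℤ) c c' =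
      (if c = c' then (R : ℤ) else 0) + (if c.1 = c'.1 then 0 else 1) := by
    rcases c with ⟨g, p⟩; rcases c' with ⟨g', p'⟩
    simp only [Matrix.add_apply, Matrix.smul_apply, Matrix.one_apply,
      Matrix.kroneckerMap_apply, Matrix.sub_apply, Matrix.of_apply, smul_eq_mul]
    by_cases h1 : g = g' <;> by_cases h2 : p = p' <;>
      simp [h1, h2, Prod.ext_iff]
  rw [hL, hR]

private lemma exists_enum' {α : Type*} [Fintype α] [DecidableEq α] (n : ℕ) (r : α → ℤ)
    (h01 : ∀ a, r a = 0 ∨ r a = 1) (hsum : ∑ a, r a = (n : ℤ)) :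
    ∃ σ : Fin n → α, Function.Injective σ ∧ (∀ u, r (σ u) = 1) ∧
      ∀ a, r a = 1 → ∃ u, σ u = a := by
  classical
  have hcard : (Finset.univ.filter fun a => r a = 1).card = n := by
    have h1 : ∑ a, r a = ∑ a ∈ Finset.univ.filter (fun a => r a = 1), (1 : ℤ) := by
      rw [Finset.sum_filter]
      apply Finset.sum_congr rfl
      intro a _
      rcases h01 a with h | h <;> simp [h]
    rw [h1, Finset.sum_const, nsmul_eq_mul, mul_one] at hsum
    exact_mod_cast hsum
  have e := Finset.equivFinOfCardEq hcard
  refine ⟨fun u => (e.symm u : α), ?_, ?_, ?_⟩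
  · intro u u' h
    apply e.symm.injective
    exact Subtype.ext h
  · intro u
    have := (e.symm u).2
    simpa using (Finset.mem_filter.mp this).2
  · intro a ha
    exact ⟨e ⟨a, Finset.mem_filter.mpr ⟨Finset.mem_univ _, ha⟩⟩, by simp⟩

/-- Wilson's construction: a `K`-GDD of type `M^U` and a `U`-GDD of type `P^V` combine to
give a `K`-GDD of type `(MP)^V`. -/
theorem gdd_wilson_product (K M U P V : ℕ) (hK : 2 ≤ K)
    (hM : 0 < M) (hU : 0 < U) (hP : 0 < P) (hV : 0 < V)
    (h1 : GDDExists K M U) (h2 : GDDExists U P V) :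
    GDDExists K (M * P) V := by
  classical
  obtain ⟨hKU, B1, R1, X1, hR1, hB1, h01X1, hrow1, hgram1⟩ := h1
  obtain ⟨hUV, B2, R2, X2, hR2, hB2, h01X2, hrow2, hgram2⟩ := h2
  have hg1 := (gram_iff' R1 X1).mp hgram1
  have hg2 := (gram_iff' R2 X2).mp hgram2
  have hen : ∀ b2 : Fin B2, ∃ σ : Fin U → Fin V × Fin P, Function.Injective σ ∧
      (∀ u, X2 b2 (σ u) = 1) ∧ ∀ a, X2 b2 a = 1 → ∃ u, σ u = a :=
    fun b2 => exists_enum' U (X2 b2) (h01X2 b2) (hrow2 b2)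
  choose σ hinj hone hsurj using hen
  have hzero : ∀ b2 a, (∀ u, σ b2 u ≠ a) → X2 b2 a = 0 := by
    intro b2 a h
    rcases h01X2 b2 a with h0 | hh
    · exact h0
    · obtain ⟨u, hu⟩ := hsurj b2 a hh
      exact absurd hu (h u)
  set Z : Fin B2 × Fin B1 → ((Fin V × Fin P) × Fin M) → ℤ :=
    fun b x => ∑ u, if σ b.1 u = x.1 then X1 b.2 (u, x.2) else 0 with hZ
  have hZ1 : ∀ b2 b1 vp (m : Fin M) u0, σ b2 u0 = vp →
      Z (b2, b1) (vp, m) = X1 b1 (u0, m) := by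
    intro b2 b1 vp m u0 h
    rw [hZ]
    dsimp only
    rw [Finset.sum_eq_single u0]
    · rw [if_pos h]
    · intro u _ hne
      rw [if_neg]
      intro hc
      exact hne (hinj b2 (hc.trans h.symm))
    · intro h'
      exact absurd (Finset.mem_univ u0) h'
  have hZ0 : ∀ b2 b1 vp (m : Fin M), (∀ u, σ b2 u ≠ vp) →
      Z (b2, b1) (vp, m) = 0 := by
    intro b2 b1 vp m h
    rw [hZ]
    dsimp only
    exact Finset.sum_eq_zero fun u _ => if_neg (h u)
  have hZ01 : ∀ b x, Z b x = 0 ∨ Z b x = 1 := by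
    rintro ⟨b2, b1⟩ ⟨vp, m⟩
    by_cases h : ∃ u, σ b2 u = vp
    · obtain ⟨u0, hu0⟩ := h
      rw [hZ1 b2 b1 vp m u0 hu0]
      exact h01X1 b1 (u0, m)
    · push_neg at h
      exact Or.inl (hZ0 b2 b1 vp m h)
  have hZrow : ∀ b2 b1, ∑ x : (Fin V × Fin P) × Fin M, Z (b2, b1) x = (K : ℤ) := by
    intro b2 b1
    have step1 : ∑ x : (Fin V × Fin P) × Fin M, Z (b2, b1) x
        = ∑ vp : Fin V × Fin P, ∑ u : Fin U,
            (if σ b2 u = vp then (∑ m : Fin M, X1 b1 (u, m)) else 0) := by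
      rw [Fintype.sum_prod_type]
      apply Finset.sum_congr rfl
      intro vp _
      rw [hZ]
      dsimp only
      rw [Finset.sum_comm]
      apply Finset.sum_congr rfl
      intro u _
      by_cases h : σ b2 u = vp <;> simp [h]
    rw [step1, Finset.sum_comm]
    have step2 : ∀ u : Fin U, ∑ vp : Fin V × Fin P,
        (if σ b2 u = vp then (∑ m : Fin M, X1 b1 (u, m)) else 0) = ∑ m, X1 b1 (u, m) := by
      intro u
      simp [Finset.sum_ite_eq]
    rw [Finset.sum_congr rfl fun u _ => step2 u, ← Fintype.sum_prod_type]
    exact hrow1 b1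
  have hZgram : ∀ x y : (Fin V × Fin P) × Fin M,
      ∑ b2, ∑ b1, Z (b2, b1) x * Z (b2, b1) y =
      (if x = y then ((R1 * R2 : ℕ) : ℤ) else 0) + (if x.1.1 = y.1.1 then 0 else 1) := by
    rintro ⟨vp, m⟩ ⟨vp', m'⟩
    have hS : ∀ b2, ∑ b1, Z (b2, b1) (vp, m) * Z (b2, b1) (vp', m') =
        X2 b2 vp * X2 b2 vp' *
          ((if ((vp, m) : (Fin V × Fin P) × Fin M) = (vp', m') then (R1 : ℤ) else 0) +
            (if vp = vp' then 0 else 1)) := by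
      intro b2
      by_cases hA : ∃ u, σ b2 u = vp
      · obtain ⟨u0, hu0⟩ := hA
        by_cases hB : ∃ u, σ b2 u = vp'
        · obtain ⟨u1, hu1⟩ := hB
          have h2vp : X2 b2 vp = 1 := hu0 ▸ hone b2 u0
          have h2vp' : X2 b2 vp' = 1 := hu1 ▸ hone b2 u1
          have hiff : u0 = u1 ↔ vp = vp' :=
            ⟨fun h => by rw [← hu0, ← hu1, h],
             fun h => hinj b2 (by rw [hu0, hu1, h])⟩
          calc ∑ b1, Z (b2, b1) (vp, m) * Z (b2, b1) (vp', m')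
              = ∑ b1, X1 b1 (u0, m) * X1 b1 (u1, m') := by
                apply Finset.sum_congr rfl
                intro b1 _
                rw [hZ1 b2 b1 vp m u0 hu0, hZ1 b2 b1 vp' m' u1 hu1]
            _ = (if ((u0, m) : Fin U × Fin M) = (u1, m') then (R1 : ℤ) else 0) +
                  (if u0 = u1 then 0 else 1) := by
                have := hg1 (u0, m) (u1, m')
                simpa using this
            _ = X2 b2 vp * X2 b2 vp' *
                  ((if ((vp, m) : (Fin V × Fin P) × Fin M) = (vp', m') then (R1 : ℤ) else 0) +
                    (if vp = vp' then 0 else 1)) := by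
                rw [h2vp, h2vp', one_mul, one_mul]
                congr 1
                · apply if_congr _ rfl rfl
                  simp only [Prod.mk.injEq]
                  exact and_congr hiff Iff.rfl
                · exact if_congr hiff rfl rfl
        · push_neg at hB
          have h2vp' : X2 b2 vp' = 0 := hzero b2 vp' hB
          rw [h2vp', mul_zero, zero_mul]
          apply Finset.sum_eq_zero
          intro b1 _
          rw [hZ0 b2 b1 vp' m' hB, mul_zero]
      · push_neg at hA
        have h2vp : X2 b2 vp = 0 := hzero b2 vp hA
        rw [h2vp, zero_mul, zero_mul]
        apply Finset.sum_eq_zero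
        intro b1 _
        rw [hZ0 b2 b1 vp m hA, zero_mul]
    rw [Finset.sum_congr rfl fun b2 _ => hS b2, ← Finset.sum_mul, hg2 vp vp']
    push_cast
    by_cases h1 : vp = vp'
    · subst h1
      by_cases h2 : m = m'
      · subst h2
        simp
        ring
      · simp [h2, Prod.ext_iff]
    · have h3 : ((vp, m) : (Fin V × Fin P) × Fin M) ≠ (vp', m') := by
        simp [Prod.ext_iff, h1]
      by_cases h4 : vp.1 = vp'.1 <;> simp [h1, h3, h4]
  -- assemble
  let E : (Fin V × Fin (M * P)) ≃ ((Fin V × Fin P) × Fin M) :=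
    ((Equiv.refl (Fin V)).prodCongr
      ((finProdFinEquiv.symm).trans (Equiv.prodComm (Fin M) (Fin P)))).trans
      (Equiv.prodAssoc (Fin V) (Fin P) (Fin M)).symm
  let ER : Fin (B2 * B1) ≃ Fin B2 × Fin B1 := finProdFinEquiv.symm
  have hE1 : ∀ c : Fin V × Fin (M * P), (E c).1.1 = c.1 := fun c => rfl
  refine ⟨le_trans hKU hUV, B2 * B1, R1 * R2, fun b c => Z (ER b) (E c), ?_, ?_, ?_, ?_, ?_⟩
  · calc (R1 * R2) * (K - 1) = R2 * (R1 * (K - 1)) := by ring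
      _ = R2 * (M * (U - 1)) := by rw [hR1]
      _ = M * (R2 * (U - 1)) := by ring
      _ = M * (P * (V - 1)) := by rw [hR2]
      _ = (M * P) * (V - 1) := by ring
  · calc (B2 * B1) * (K * (K - 1)) = (B1 * (K * (K - 1))) * B2 := by ring
      _ = (M ^ 2 * U * (U - 1)) * B2 := by rw [hB1]
      _ = M ^ 2 * (B2 * (U * (U - 1))) := by ring
      _ = M ^ 2 * (P ^ 2 * V * (V - 1)) := by rw [hB2]
      _ = (M * P) ^ 2 * V * (V - 1) := by ring
  · intro b c
    exact hZ01 (ER b) (E c)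
  · intro b
    refine (Fintype.sum_equiv E _ _ fun c => rfl).trans ?_
    exact hZrow (ER b).1 (ER b).2
  · apply (gram_iff' (R1 * R2) _).mpr
    intro c c'
    calc ∑ b : Fin (B2 * B1), Z (ER b) (E c) * Z (ER b) (E c')
        = ∑ p : Fin B2 × Fin B1, Z p (E c) * Z p (E c') :=
          Fintype.sum_equiv ER _ _ fun b => rfl
      _ = ∑ b2, ∑ b1, Z (b2, b1) (E c) * Z (b2, b1) (E c') := Fintype.sum_prod_type _
      _ = (if E c = E c' then ((R1 * R2 : ℕ) : ℤ) else 0) +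
            (if (E c).1.1 = (E c').1.1 then 0 else 1) := hZgram (E c) (E c')
      _ = (if c = c' then ((R1 * R2 : ℕ) : ℤ) else 0) + (if c.1 = c'.1 then 0 else 1) := by
          simp only [E.injective.eq_iff, hE1]
end

section
/- Let D and N be integers with 1 < D < N, and let L ∈ {1,−1}. Suppose there exist positive integers S and K such that S²(N−D) = D(N−1) and K·D·(S+L) = N·S (i.e. the real numbers sqrt(D(N−1)/(N−D)) and NS/(D(S+L)) are both integers). Then (D,N) is of type (K,L,S), i.e. D·K = S·[S(K−1)+L] and N = (S+L)·[S(K−1)+L]. -/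
/-- Converse of the parameter characterization: if `1 < D < N`, `L = ±1`, and there are
positive integers `S`, `K` with `S²(N-D) = D(N-1)` (i.e. `S = sqrt(D(N-1)/(N-D))`) and
`K·D·(S+L) = N·S` (i.e. `K = NS/(D(S+L))`), then `(D,N)` is of type `(K,L,S)`. -/
theorem type_parameters_converse (D N L S K : ℤ) (hD : 1 < D) (hDN : D < N)
    (hL : L = 1 ∨ L = -1) (hS : 0 < S) (hK : 0 < K)
    (h1 : S ^ 2 * (N - D) = D * (N - 1))
    (h2 : K * D * (S + L) = N * S) :
    D * K = S * (S * (K - 1) + L) ∧ N = (S + L) * (S * (K - 1) + L) := by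
  have hL2 : L ^ 2 = 1 := by rcases hL with h | h <;> simp [h]
  have hSL : S + L ≠ 0 := by
    intro h
    have h0 : N * S = 0 := by rw [← h2, h]; ring
    rcases mul_eq_zero.mp h0 with h' | h' <;> omega
  have hD0 : D ≠ 0 := by omega
  have key : D * ((S + L) * (K * (S ^ 2 - D) - S * (S - L))) = 0 := by
    linear_combination (S ^ 2 - D) * h2 + S * h1 + D * S * hL2
  have key2 : (S + L) * (K * (S ^ 2 - D) - S * (S - L)) = 0 :=
    by rcases mul_eq_zero.mp key with h | h
       · exact absurd h hD0
       · exact h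
  have key3 : K * (S ^ 2 - D) - S * (S - L) = 0 := by
    rcases mul_eq_zero.mp key2 with h | h
    · exact absurd h hSL
    · exact h
  have c1 : D * K = S * (S * (K - 1) + L) := by linarith [key3]
  refine ⟨c1, ?_⟩
  have hS0 : S ≠ 0 := by omega
  have : N * S = ((S + L) * (S * (K - 1) + L)) * S := by
    rw [← h2]; linear_combination (S + L) * c1
  exact mul_right_cancel₀ hS0 this
end

section
/- Let K ≥ 2, S ≥ 2 be integers and L ∈ {1,−1} with K dividing S(S−L), and set M = S(K−1)+L. Then for every integer U ≥ K, the divisibility conditions (K−1) | M(U−1) and K(K−1) | M²U(U−1) hold if and only if (K−1) | (U−1) and K(K−1) | (S−L)·U·(U−1). Moreover, if (K−1) | (U−1), then (S+L) divides M(U−1)/(K−1) if and only if (S+L)(K−1) divides (K−2)(U−1). -/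
private lemma dvd_iff_of_sub' {d a b : ℤ} (h : d ∣ a - b) : d ∣ a ↔ d ∣ b :=
  ⟨fun ha => by simpa using dvd_sub ha h, fun hb => by simpa using dvd_add h hb⟩

private lemma unit_mul_dvd' {L d x : ℤ} (hL : L = 1 ∨ L = -1) : d ∣ L * x ↔ d ∣ x := by
  rcases hL with h | h <;> subst h <;> simp

/-- Arithmetic reduction of the GDD conditions for the main construction.  Let `K ≥ 2`,
`S ≥ 2`, `L = ±1` with `K ∣ S(S-L)`, and `M = S(K-1)+L`.  Then for `U ≥ K`:
the integrality of `R = M(U-1)/(K-1)` and `B = M²U(U-1)/(K(K-1))` is equivalent to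
`(K-1) ∣ (U-1)` together with `K(K-1) ∣ (S-L)U(U-1)`; and, assuming `(K-1) ∣ (U-1)`,
`(S+L)` divides `R = M(U-1)/(K-1)` if and only if `(S+L)(K-1)` divides `(K-2)(U-1)`. -/
theorem gdd_condition_reduction (K S U : ℕ) (L M : ℤ) (hK : 2 ≤ K) (hS : 2 ≤ S)
    (hL : L = 1 ∨ L = -1) (hdvd : (K : ℤ) ∣ (S : ℤ) * ((S : ℤ) - L))
    (hM : M = (S : ℤ) * ((K : ℤ) - 1) + L) (hU : K ≤ U) :
    ((((K : ℤ) - 1) ∣ M * ((U : ℤ) - 1) ∧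
        (K : ℤ) * ((K : ℤ) - 1) ∣ M ^ 2 * (U : ℤ) * ((U : ℤ) - 1)) ↔
      (((K : ℤ) - 1) ∣ ((U : ℤ) - 1) ∧
        (K : ℤ) * ((K : ℤ) - 1) ∣ ((S : ℤ) - L) * (U : ℤ) * ((U : ℤ) - 1))) ∧
    (((K : ℤ) - 1) ∣ ((U : ℤ) - 1) →
      (((S : ℤ) + L) ∣ (M * ((U : ℤ) - 1)) / ((K : ℤ) - 1) ↔
        ((S : ℤ) + L) * ((K : ℤ) - 1) ∣ ((K : ℤ) - 2) * ((U : ℤ) - 1))) := by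
  have hL2 : L * L = 1 := by rcases hL with h | h <;> simp [h]
  set k : ℤ := (K : ℤ) with hk
  have hk2 : (2 : ℤ) ≤ k := by rw [hk]; exact_mod_cast hK
  have hk1ne : k - 1 ≠ 0 := by linarith
  subst hM
  set M : ℤ := (S : ℤ) * (k - 1) + L with hMdef
  -- coprimality of (k-1) and M
  have copMk1 : IsCoprime (k - 1) M := ⟨-(L * (S : ℤ)), L, by linear_combination hL2⟩
  have copKk1 : IsCoprime k (k - 1) := ⟨1, -1, by ring⟩
  obtain ⟨c, hc⟩ := hdvd
  -- k ∣ M^2 + L*(S-L)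
  have hKdvd : k ∣ M ^ 2 + L * ((S : ℤ) - L) :=
    ⟨(S : ℤ) ^ 2 * k - 2 * (S : ℤ) * ((S : ℤ) - L) + c, by linear_combination hc⟩
  -- key iff modulo k
  have hKiff : k ∣ M ^ 2 * (U : ℤ) * ((U : ℤ) - 1) ↔
      k ∣ ((S : ℤ) - L) * (U : ℤ) * ((U : ℤ) - 1) := by
    have hsub : k ∣ M ^ 2 * (U : ℤ) * ((U : ℤ) - 1) -
        (-(L * (((S : ℤ) - L) * (U : ℤ) * ((U : ℤ) - 1)))) := by
      obtain ⟨d, hd⟩ := hKdvd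
      exact ⟨d * (U : ℤ) * ((U : ℤ) - 1), by linear_combination ((U : ℤ) * ((U : ℤ) - 1)) * hd⟩
    rw [dvd_iff_of_sub' hsub, dvd_neg, unit_mul_dvd' hL]
  constructor
  · constructor
    · rintro ⟨h1, h2⟩
      have hU1 : (k - 1) ∣ ((U : ℤ) - 1) := copMk1.dvd_of_dvd_mul_left h1
      refine ⟨hU1, copKk1.mul_dvd ?_ ?_⟩
      · exact hKiff.mp (dvd_trans (dvd_mul_right k (k - 1)) h2)
      · exact Dvd.dvd.mul_left hU1 _
    · rintro ⟨hU1, h2⟩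
      refine ⟨hU1.mul_left M, copKk1.mul_dvd ?_ ?_⟩
      · exact hKiff.mpr (dvd_trans (dvd_mul_right k (k - 1)) h2)
      · exact Dvd.dvd.mul_left hU1 _
  · rintro ⟨t, ht⟩
    have hdivq : M * ((U : ℤ) - 1) / (k - 1) = M * t := by
      rw [ht, mul_comm (k - 1) t, ← mul_assoc, Int.mul_ediv_cancel _ hk1ne]
    rw [hdivq, ht]
    have hrhs : ((S : ℤ) + L) * (k - 1) ∣ (k - 2) * ((k - 1) * t) ↔
        ((S : ℤ) + L) ∣ (k - 2) * t := by
      rw [show ((S : ℤ) + L) * (k - 1) = (k - 1) * ((S : ℤ) + L) by ring,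
        show (k - 2) * ((k - 1) * t) = (k - 1) * ((k - 2) * t) by ring,
        mul_dvd_mul_iff_left hk1ne]
    rw [hrhs]
    have hsub : ((S : ℤ) + L) ∣ M * t - (-(L * ((k - 2) * t))) :=
      ⟨(k - 1) * t, by ring⟩
    rw [dvd_iff_of_sub' hsub, dvd_neg, unit_mul_dvd' hL]
end

section
/- Let K ≥ 2 and M ≥ 2 be integers, let X be a {0,1}-valued M²×(KM) incidence matrix of a TD(K,M), i.e. X·1 = K·1 and XᵀX = M·I + (J_K − I_K) ⊗ J_M, and let H be an M×M complex Hadamard matrix whose first row is all ones; let F be the (M−1)×M matrix obtained by deleting the first row of H. Then the K(M−1)×M² matrix Φ = (I_K ⊗ F)·Xᵀ has all entries of modulus one and satisfies Φ Φ* = M²·I, Φ*Φ = M·X Xᵀ − K·J, and Φ·1 = 0. In particular, the columns of Φ form a flat two-distance tight frame for ℂ^{K(M−1)}. -/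
/-!
Write `Φ = (I ⊗ F) Xᵀ`. The Gram identity of a transversal design forces every block to meet
every group in exactly one point, so each entry of `Φ` is an entry of `F`, hence unimodular.
The rows of `F` are the rows of `H` orthogonal to the all-ones row, so `F Fᴴ = M I`,
`F J = 0` and `Fᴴ F = M I - J`. Substituting `Xᵀ X = M I + (J - I) ⊗ J` into
`Φ Φᴴ = (I ⊗ F) Xᵀ X (I ⊗ Fᴴ)` kills the second term and leaves `M² I`; dually
`Φᴴ Φ = X (I ⊗ (M I - J)) Xᵀ = M X Xᵀ - K J`, and `Φ 1 = (I ⊗ F)(M 1) = 0`.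
-/

open Matrix Kronecker Finset

theorem Finset.sum_eq_card_filter_of_zero_or_one {ι R : Type*} [AddCommMonoidWithOne R]
    (s : Finset ι) {f : ι → R} (hf : ∀ i, f i = 0 ∨ f i = 1) [DecidablePred (f · = 1)] :
    ∑ i ∈ s, f i = #{i ∈ s | f i = 1} := by
  rw [natCast_card_filter]
  refine sum_congr rfl fun i _ => ?_
  rcases hf i with h | h <;> simp [h]

theorem Fintype.eq_zero_of_sum_eq_zero_of_zero_or_one {ι R : Type*} [Fintype ι]
    [AddCommMonoidWithOne R] [CharZero R] {f : ι → R} (hf : ∀ i, f i = 0 ∨ f i = 1)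
    (hsum : ∑ i, f i = 0) (i : ι) : f i = 0 := by
  classical
  rw [sum_eq_card_filter_of_zero_or_one _ hf, Nat.cast_eq_zero, Finset.card_eq_zero,
    filter_eq_empty_iff] at hsum
  exact (hf i).resolve_right (hsum (mem_univ i))

section RowDeletion

variable {R n m : Type*} [Fintype n] [DecidableEq n]

theorem Matrix.mul_conjTranspose_eq_smul_one [Field R] [StarRing R] {H : Matrix n n R} {c : R}
    (hc : c ≠ 0) (hH : Hᴴ * H = c • 1) : H * Hᴴ = c • 1 := by
  have hinv : (c⁻¹ • Hᴴ) * H = 1 := by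
    rw [smul_mul, hH, smul_smul, inv_mul_cancel₀ hc, one_smul]
  calc H * Hᴴ = c • (H * (c⁻¹ • Hᴴ)) := by
        rw [Matrix.mul_smul, smul_smul, mul_inv_cancel₀ hc, one_smul]
    _ = c • 1 := by rw [mul_eq_one_comm.mp hinv]

variable [CommRing R] [StarRing R] {H : Matrix n n R} {c : R} {i₀ : n}

theorem Matrix.submatrix_mul_conjTranspose_submatrix [DecidableEq m] {f : m → n}
    (hf : Function.Injective f) (hH : H * Hᴴ = c • 1) :
    H.submatrix f id * (H.submatrix f id)ᴴ = c • 1 := by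
  rw [conjTranspose_submatrix, ← submatrix_mul _ _ _ _ _ Function.bijective_id, hH,
    submatrix_smul, Pi.smul_apply, Pi.smul_apply, submatrix_one f hf]

theorem Matrix.sum_row_eq_zero_of_ne (hH : H * Hᴴ = c • 1) (hrow : ∀ j, H i₀ j = 1) {r : n}
    (hr : r ≠ i₀) : ∑ j, H r j = 0 := by
  simpa [mul_apply, hrow, hr] using congrFun (congrFun hH r) i₀

theorem Matrix.conjTranspose_mul_submatrix_compl [Fintype m] (e : m ≃ {r // r ≠ i₀})
    (hH : Hᴴ * H = c • 1) (hrow : ∀ j, H i₀ j = 1) :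
    (H.submatrix (fun i => (e i : n)) id)ᴴ * H.submatrix (fun i => (e i : n)) id =
      c • 1 - of fun _ _ => 1 := by
  ext j j'
  have h := congrFun (congrFun hH j) j'
  rw [mul_apply, Fintype.sum_eq_add_sum_subtype_ne _ i₀, ← e.sum_comp] at h
  simp only [conjTranspose_apply, hrow, star_one, one_mul] at h
  simp [mul_apply, ← h]

end RowDeletion

/-- Incidence matrix of a transversal design with blocks `β` and point set `κ × γ`, the groups
being the fibres `{k} × γ`. -/
structure IsTransversalDesign {R β κ γ : Type*} [Ring R] [Fintype β] [Fintype κ] [Fintype γ]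
    [DecidableEq κ] [DecidableEq γ] (X : Matrix β (κ × γ) R) : Prop where
  zero_or_one : ∀ b v, X b v = 0 ∨ X b v = 1
  sum_row : ∀ b, ∑ v, X b v = Fintype.card κ
  transpose_mul_self : Xᵀ * X = (Fintype.card γ : R) • 1 +
    (of (fun _ _ => 1) - 1 : Matrix κ κ R) ⊗ₖ (of fun _ _ => 1 : Matrix γ γ R)

namespace IsTransversalDesign

variable {R β κ γ : Type*} [Ring R] [Fintype β] [Fintype κ] [Fintype γ] [DecidableEq κ]
  [DecidableEq γ] {X : Matrix β (κ × γ) R}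

theorem apply_mul_self (hX : IsTransversalDesign X) (b : β) (v : κ × γ) :
    X b v * X b v = X b v := by
  rcases hX.zero_or_one b v with h | h <;> simp [h]

theorem sum_col (hX : IsTransversalDesign X) (v : κ × γ) : ∑ b, X b v = Fintype.card γ := by
  have h := congrFun (congrFun hX.transpose_mul_self v) v
  simpa [mul_apply, hX.apply_mul_self] using h

theorem mul_eq_zero_of_ne [CharZero R] (hX : IsTransversalDesign X) (b : β) (k : κ) {g g' : γ}
    (hg : g ≠ g') : X b (k, g) * X b (k, g') = 0 := by
  have hsum : ∑ b, X b (k, g) * X b (k, g') = 0 := by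
    simpa [mul_apply, hg] using congrFun (congrFun hX.transpose_mul_self (k, g)) (k, g')
  refine Fintype.eq_zero_of_sum_eq_zero_of_zero_or_one (fun b => ?_) hsum b
  rcases hX.zero_or_one b (k, g) with h | h <;> simp [h, hX.zero_or_one b (k, g')]

theorem exists_eq_single [CharZero R] (hX : IsTransversalDesign X) (b : β) (k : κ) :
    ∃ g, (fun g' => X b (k, g')) = Pi.single g 1 := by
  classical
  set S : κ → Finset γ := fun k => {g | X b (k, g) = 1}
  have hS_le : ∀ k, #(S k) ≤ 1 := fun k => card_le_one.mpr fun g hg g' hg' => by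
    by_contra hne
    have := hX.mul_eq_zero_of_ne b k hne
    simp_all [S]
  have hS_sum : ∑ k, #(S k) = Fintype.card κ := by
    have h : ∑ k, (#(S k) : R) = Fintype.card κ := by
      rw [← hX.sum_row b, Fintype.sum_prod_type]
      exact sum_congr rfl fun k _ =>
        (sum_eq_card_filter_of_zero_or_one _ fun g => hX.zero_or_one b (k, g)).symm
    exact_mod_cast h
  obtain ⟨g, hg⟩ := card_eq_one.mp <|
    (sum_eq_sum_iff_of_le fun k _ => hS_le k).mp (by simpa using hS_sum) k (mem_univ k)
  have hmem : ∀ g', X b (k, g') = 1 ↔ g' = g := fun g' => by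
    simpa [S] using Finset.ext_iff.mp hg g'
  refine ⟨g, funext fun g' => ?_⟩
  rw [Pi.single_apply]
  split_ifs with h
  · exact (hmem g').mpr h
  · exact (hX.zero_or_one b (k, g')).resolve_right (mt (hmem g').mp h)

theorem mul_one_kronecker_const [CharZero R] (hX : IsTransversalDesign X) :
    X * ((1 : Matrix κ κ R) ⊗ₖ (of fun _ _ => 1 : Matrix γ γ R)) = of fun _ _ => 1 := by
  ext b ⟨k, g⟩
  obtain ⟨g₀, hg₀⟩ := hX.exists_eq_single b k
  have hrow : ∑ g', X b (k, g') = 1 := by simp [congrFun hg₀]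
  simp only [mul_apply, Fintype.sum_prod_type, kronecker_apply, one_apply, of_apply, mul_one,
    mul_ite, mul_zero]
  simpa [sum_ite_irrel] using hrow

theorem const_mul_transpose (hX : IsTransversalDesign X) :
    (of fun _ _ => 1 : Matrix β (κ × γ) R) * Xᵀ = (Fintype.card κ : R) • of fun _ _ => 1 := by
  ext b b'
  simpa [mul_apply] using hX.sum_row b'

theorem transpose_conjTranspose [StarRing R] (hX : IsTransversalDesign X) : Xᵀᴴ = X := by
  ext b v
  rcases hX.zero_or_one b v with h | h <;> simp [h]

end IsTransversalDesign

section Frame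

variable {R κ γ β μ : Type*} [CommRing R] [Fintype κ] [DecidableEq κ] [Fintype γ]
  {F : Matrix μ γ R} {X : Matrix β (κ × γ) R}

theorem Matrix.one_kronecker_mulVec (A : Matrix μ γ R) (v : κ × γ → R) :
    ((1 : Matrix κ κ R) ⊗ₖ A) *ᵥ v = fun p => (A *ᵥ fun g => v (p.1, g)) p.2 := by
  ext ⟨k, i⟩
  simp [mulVec, dotProduct, Fintype.sum_prod_type, one_apply]

variable (F X) in
def tdFrame : Matrix (κ × μ) β R := ((1 : Matrix κ κ R) ⊗ₖ F) * Xᵀ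

theorem tdFrame_apply (p : κ × μ) (b : β) :
    tdFrame F X p b = (F *ᵥ fun g => X b (p.1, g)) p.2 :=
  congrFun (one_kronecker_mulVec F (X b)) p

theorem IsTransversalDesign.exists_tdFrame_apply_eq [Fintype β] [DecidableEq γ] [CharZero R]
    (hX : IsTransversalDesign X) (p : κ × μ) (b : β) : ∃ g, tdFrame F X p b = F p.2 g := by
  obtain ⟨g, hg⟩ := hX.exists_eq_single b p.1
  exact ⟨g, by rw [tdFrame_apply, hg, mulVec_single_one, col_apply]⟩

theorem tdFrame_mulVec_const [Fintype β] (hF : ∀ i, ∑ g, F i g = 0) {c : R}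
    (hX : ∀ v, ∑ b, X b v = c) :
    tdFrame F X *ᵥ (fun _ => 1) = 0 := by
  have hXv : Xᵀ *ᵥ (fun _ => 1) = fun _ => c := by
    ext v
    simp [mulVec, dotProduct, hX]
  rw [tdFrame, ← mulVec_mulVec, hXv, one_kronecker_mulVec]
  ext p
  simp [mulVec, dotProduct, ← sum_mul, hF]

variable [StarRing R]

theorem tdFrame_mul_conjTranspose [Fintype β] [DecidableEq μ] [DecidableEq γ] (hXX : Xᵀᴴ = X)
    {c : R} {B : Matrix κ κ R} (hX : Xᵀ * X = c • 1 + B ⊗ₖ (of fun _ _ => 1 : Matrix γ γ R))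
    (hFF : F * Fᴴ = c • 1) (hF : ∀ i, ∑ g, F i g = 0) :
    tdFrame F X * (tdFrame F X)ᴴ = c ^ 2 • 1 := by
  have hFJ : F * (of fun _ _ => 1 : Matrix γ γ R) = 0 := by
    ext i g
    simp [mul_apply, hF]
  calc tdFrame F X * (tdFrame F X)ᴴ
      = ((1 : Matrix κ κ R) ⊗ₖ F) * (Xᵀ * X) * ((1 : Matrix κ κ R) ⊗ₖ Fᴴ) := by
        rw [tdFrame, conjTranspose_mul, hXX, conjTranspose_kronecker, conjTranspose_one,
          Matrix.mul_assoc, Matrix.mul_assoc, Matrix.mul_assoc]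
    _ = c • ((1 : Matrix κ κ R) ⊗ₖ (F * Fᴴ)) +
          B ⊗ₖ (F * (of fun _ _ => 1 : Matrix γ γ R) * Fᴴ) := by
        rw [hX]
        simp only [Matrix.mul_add, Matrix.add_mul, Matrix.mul_smul, Matrix.smul_mul,
          Matrix.mul_one, ← mul_kronecker_mul, Matrix.one_mul]
    _ = c ^ 2 • 1 := by
        rw [hFF, hFJ, Matrix.zero_mul, kronecker_zero, add_zero, kronecker_smul,
          one_kronecker_one, smul_smul, sq]

theorem conjTranspose_tdFrame_mul [Fintype β] [Fintype μ] [DecidableEq γ] (hXX : Xᵀᴴ = X)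
    {c d : R} (hFF : Fᴴ * F = c • 1 - of fun _ _ => 1)
    (hgroup : X * ((1 : Matrix κ κ R) ⊗ₖ (of fun _ _ => 1 : Matrix γ γ R)) = of fun _ _ => 1)
    (hrow : (of fun _ _ => 1 : Matrix β (κ × γ) R) * Xᵀ = d • of fun _ _ => 1) :
    (tdFrame F X)ᴴ * tdFrame F X = c • (X * Xᵀ) - d • of fun _ _ => 1 := by
  have hkron : (1 : Matrix κ κ R) ⊗ₖ (Fᴴ * F) = c • 1 - 1 ⊗ₖ (of fun _ _ => 1) := by
    ext ⟨k, g⟩ ⟨k', g'⟩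
    by_cases hk : k = k' <;> simp [hFF, one_apply, hk]
  calc (tdFrame F X)ᴴ * tdFrame F X = X * ((1 * 1 : Matrix κ κ R) ⊗ₖ (Fᴴ * F)) * Xᵀ := by
        rw [tdFrame, conjTranspose_mul, hXX, conjTranspose_kronecker, conjTranspose_one,
          mul_kronecker_mul, Matrix.mul_assoc, Matrix.mul_assoc, Matrix.mul_assoc]
    _ = c • (X * Xᵀ) - d • of fun _ _ => 1 := by
        rw [Matrix.mul_one, hkron, Matrix.mul_sub, Matrix.sub_mul, hgroup, hrow, Matrix.mul_smul,
          Matrix.smul_mul, Matrix.mul_one]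

end Frame

/-- Flat two-distance tight frames from transversal designs.  Let `X` be a `{0,1}`
incidence matrix of a `TD(K,M)`, let `H` be an `M × M` complex Hadamard matrix whose first
row is all ones, and let `F` be `H` with its first row deleted.  Then
`Φ = (I_K ⊗ F) Xᵀ` is flat (all entries unimodular) and satisfies `Φ Φᴴ = M²·I`,
`Φᴴ Φ = M·X Xᵀ - K·J`, and `Φ·1 = 0`. -/
theorem td_flat_tdtf (K M : ℕ) (hM : 2 ≤ M)
    (X : Matrix (Fin (M * M)) (Fin K × Fin M) ℂ)
    (hX01 : ∀ b v, X b v = 0 ∨ X b v = 1)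
    (hXrow : ∀ b, ∑ v, X b v = (K : ℂ))
    (hXgram : Xᵀ * X = (M : ℂ) • (1 : Matrix (Fin K × Fin M) (Fin K × Fin M) ℂ) +
      Matrix.kroneckerMap (· * ·)
        (Matrix.of (fun _ _ => (1 : ℂ)) - (1 : Matrix (Fin K) (Fin K) ℂ))
        (Matrix.of (fun _ _ => (1 : ℂ)) : Matrix (Fin M) (Fin M) ℂ))
    (H : Matrix (Fin M) (Fin M) ℂ)
    (hHflat : ∀ i j, ‖H i j‖ = 1)
    (hHorth : Hᴴ * H = (M : ℂ) • (1 : Matrix (Fin M) (Fin M) ℂ))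
    (hHrow : ∀ j, H ⟨0, by omega⟩ j = 1)
    (F : Matrix (Fin (M - 1)) (Fin M) ℂ)
    (hF : ∀ (i : Fin (M - 1)) (j : Fin M), F i j = H (Fin.cast (by omega) i.succ) j)
    (Φ : Matrix (Fin K × Fin (M - 1)) (Fin (M * M)) ℂ)
    (hΦ : Φ = Matrix.kroneckerMap (· * ·) (1 : Matrix (Fin K) (Fin K) ℂ) F * Xᵀ) :
    (∀ p q, ‖Φ p q‖ = 1) ∧
    Φ * Φᴴ = ((M : ℂ) ^ 2) • (1 : Matrix (Fin K × Fin (M - 1)) (Fin K × Fin (M - 1)) ℂ) ∧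
    Φᴴ * Φ = (M : ℂ) • (X * Xᵀ) - (K : ℂ) • (Matrix.of (fun _ _ => (1 : ℂ))) ∧
    Φ *ᵥ (fun _ => 1) = 0 := by
  have hX : IsTransversalDesign X :=
    ⟨hX01, by simpa only [Fintype.card_fin] using hXrow,
      by simpa only [Fintype.card_fin] using hXgram⟩
  obtain ⟨e, he⟩ : ∃ e : Fin (M - 1) ≃ {r : Fin M // r ≠ ⟨0, by omega⟩},
      ∀ i, (e i : Fin M) = Fin.cast (by omega) i.succ := by
    refine ⟨(finSuccAboveEquiv 0).trans ((finCongr (by omega)).subtypeEquiv fun r => ?_),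
      fun i => rfl⟩
    rw [ne_eq, ne_eq, Fin.ext_iff, Fin.ext_iff]
    rfl
  have hFH : F = H.submatrix (fun i => (e i : Fin M)) id := by
    ext i j
    rw [hF, submatrix_apply, he, id]
  have hHH : H * Hᴴ = (M : ℂ) • 1 :=
    mul_conjTranspose_eq_smul_one (Nat.cast_ne_zero.mpr (by omega)) hHorth
  subst hFH
  have hFrow : ∀ i, ∑ j, H.submatrix (fun i => (e i : Fin M)) id i j = 0 := fun i =>
    sum_row_eq_zero_of_ne hHH hHrow (e i).2
  replace hΦ : Φ = tdFrame _ X := hΦ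
  subst hΦ
  refine ⟨fun p b => ?_, ?_, ?_, tdFrame_mulVec_const hFrow hX.sum_col⟩
  · obtain ⟨g, hg⟩ := hX.exists_tdFrame_apply_eq p b
    rw [hg]
    exact hHflat _ _
  · exact tdFrame_mul_conjTranspose hX.transpose_conjTranspose hXgram
      (submatrix_mul_conjTranspose_submatrix (Subtype.val_injective.comp e.injective) hHH) hFrow
  · simpa using conjTranspose_tdFrame_mul hX.transpose_conjTranspose
      (conjTranspose_mul_submatrix_compl e hHorth hHrow) hX.mul_one_kronecker_const
      hX.const_mul_transpose
end

section
/- Let K ≥ 2 be an integer. If there exist an incidence matrix of a TD(K,2K) and a real Hadamard matrix of size 2K, then there exists a flat real equiangular tight frame ETF(K(2K−1), 4K²): namely 4K² vectors in ℝ^{K(2K−1)}, all of whose coordinates have absolute value one, forming an equiangular tight frame for ℝ^{K(2K−1)}. -/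
open Matrix

private lemma sum_mul_sum_orth {ι : Type*} [Fintype ι] (x f : ι → ℝ)
    (hx : ∀ v, x v * x v = x v) (horth : ∀ v w, v ≠ w → x v * x w = 0) :
    (∑ v, x v * f v) * (∑ v, x v * f v) = ∑ v, x v * (f v * f v) := by
  rw [Finset.sum_mul_sum]
  apply Finset.sum_congr rfl
  intro v _
  rw [Finset.sum_eq_single v]
  · calc x v * f v * (x v * f v) = (x v * x v) * (f v * f v) := by ring
      _ = x v * (f v * f v) := by rw [hx]
  · intro w _ hw
    calc x v * f v * (x w * f w) = (x v * x w) * (f v * f w) := by ring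
      _ = 0 := by rw [horth v w fun h => hw h.symm, zero_mul]
  · intro h; exact absurd (Finset.mem_univ v) h

private lemma rearr {β ι : Type*} [Fintype β] [Fintype ι] (x y : β → ι → ℝ) (h k : ι → ℝ) :
    ∑ b, (∑ v, x b v * h v) * (∑ w, y b w * k w)
      = ∑ v, ∑ w, h v * k w * (∑ b, x b v * y b w) := by
  calc ∑ b, (∑ v, x b v * h v) * (∑ w, y b w * k w)
      = ∑ b, ∑ v, ∑ w, (x b v * h v) * (y b w * k w) :=
        Finset.sum_congr rfl fun b _ => Finset.sum_mul_sum _ _ _ _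
    _ = ∑ v, ∑ w, h v * k w * (∑ b, x b v * y b w) := by
        rw [Finset.sum_comm]
        refine Finset.sum_congr rfl fun v _ => ?_
        rw [Finset.sum_comm]
        refine Finset.sum_congr rfl fun w _ => ?_
        rw [Finset.mul_sum]
        exact Finset.sum_congr rfl fun b _ => by ring

private lemma rearr2 {β ι : Type*} [Fintype β] [Fintype ι] (x y : ι → ℝ) (h k : β → ι → ℝ) :
    ∑ b, (∑ v, x v * h b v) * (∑ w, y w * k b w)
      = ∑ v, ∑ w, x v * y w * (∑ b, h b v * k b w) := by
  calc ∑ b, (∑ v, x v * h b v) * (∑ w, y w * k b w)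
      = ∑ b, ∑ v, ∑ w, (x v * h b v) * (y w * k b w) :=
        Finset.sum_congr rfl fun b _ => Finset.sum_mul_sum _ _ _ _
    _ = ∑ v, ∑ w, x v * y w * (∑ b, h b v * k b w) := by
        rw [Finset.sum_comm]
        refine Finset.sum_congr rfl fun v _ => ?_
        rw [Finset.sum_comm]
        refine Finset.sum_congr rfl fun w _ => ?_
        rw [Finset.mul_sum]
        exact Finset.sum_congr rfl fun b _ => by ring

/-- If a `TD(K,2K)` and a real Hadamard matrix of size `2K` exist, then a flat real
`ETF(K(2K-1), 4K²)` exists: `4K²` vectors in `ℝ^{K(2K-1)}` with all coordinates of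
absolute value one, forming an equiangular tight frame. -/
theorem flat_real_etf_from_td (K : ℕ) (hK : 2 ≤ K)
    (hTD : ∃ X : Matrix (Fin ((2 * K) * (2 * K))) (Fin K × Fin (2 * K)) ℝ,
      (∀ b v, X b v = 0 ∨ X b v = 1) ∧
      (∀ b, ∑ v, X b v = (K : ℝ)) ∧
      Xᵀ * X = ((2 * K : ℕ) : ℝ) •
          (1 : Matrix (Fin K × Fin (2 * K)) (Fin K × Fin (2 * K)) ℝ) +
        Matrix.kroneckerMap (· * ·)
          (Matrix.of (fun _ _ => (1 : ℝ)) - (1 : Matrix (Fin K) (Fin K) ℝ))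
          (Matrix.of (fun _ _ => (1 : ℝ)) : Matrix (Fin (2 * K)) (Fin (2 * K)) ℝ))
    (hHad : ∃ H : Matrix (Fin (2 * K)) (Fin (2 * K)) ℝ,
      (∀ i j, H i j = 1 ∨ H i j = -1) ∧ Hᵀ * H = ((2 * K : ℕ) : ℝ) • 1) :
    ∃ Φ : Matrix (Fin (K * (2 * K - 1))) (Fin (4 * K ^ 2)) ℝ,
      (∀ d n, |Φ d n| = 1) ∧
      (∃ c : ℝ, 0 < c ∧ ∀ n, (Φᵀ * Φ) n n = c) ∧
      (∃ A : ℝ, 0 < A ∧ Φ * Φᵀ = A • (1 : Matrix (Fin (K * (2 * K - 1))) (Fin (K * (2 * K - 1))) ℝ)) ∧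
      (∃ μ : ℝ, ∀ n n' : Fin (4 * K ^ 2), n ≠ n' → |(Φᵀ * Φ) n n'| = μ) := by
  obtain ⟨X, hX01, hX2, hX3⟩ := hTD
  obtain ⟨H, hHpm, hHtH⟩ := hHad
  set M : ℝ := ((2 * K : ℕ) : ℝ) with hMdef
  have hMpos : (0:ℝ) < M := by
    rw [hMdef]; exact_mod_cast (by omega : 0 < 2 * K)
  -- Hadamard facts
  have hcolH : ∀ j j', ∑ i, H i j * H i j' = if j = j' then M else 0 := by
    intro j j'
    have h := congrFun (congrFun hHtH j) j'
    simpa [Matrix.mul_apply, Matrix.transpose_apply, Matrix.smul_apply, Matrix.one_apply,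
      mul_ite, mul_one, mul_zero] using h
  have hHHt : H * Hᵀ = M • 1 := by
    have h1 : (M⁻¹ • Hᵀ) * H = 1 := by
      rw [Matrix.smul_mul, hHtH, smul_smul, inv_mul_cancel₀ (ne_of_gt hMpos), one_smul]
    have h2 : H * (M⁻¹ • Hᵀ) = 1 := mul_eq_one_comm.mp h1
    rw [Matrix.mul_smul] at h2
    calc H * Hᵀ = M • (M⁻¹ • (H * Hᵀ)) := by
          rw [smul_smul, mul_inv_cancel₀ (ne_of_gt hMpos), one_smul]
      _ = M • 1 := by rw [h2]
  have hrowH : ∀ i i', ∑ j, H i j * H i' j = if i = i' then M else 0 := by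
    intro i i'
    have h := congrFun (congrFun hHHt i) i'
    simpa [Matrix.mul_apply, Matrix.transpose_apply, Matrix.smul_apply, Matrix.one_apply,
      mul_ite, mul_one, mul_zero] using h
  set z : Fin (2 * K) := ⟨0, by omega⟩ with hz
  set H' : Matrix (Fin (2 * K)) (Fin (2 * K)) ℝ := fun i j => H i j * H z j with hH'
  have hH'pm : ∀ i j, H' i j = 1 ∨ H' i j = -1 := by
    intro i j
    rcases hHpm i j with h | h <;> rcases hHpm z j with h2 | h2 <;> simp [hH', h, h2]
  have hH'z : ∀ j, H' z j = 1 := by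
    intro j; rcases hHpm z j with h | h <;> simp [hH', h]
  have hH'sq : ∀ i j, H' i j * H' i j = 1 := by
    intro i j; rcases hH'pm i j with h | h <;> rw [h] <;> norm_num
  have hrowH' : ∀ i i', ∑ j, H' i j * H' i' j = if i = i' then M else 0 := by
    intro i i'
    have hj : ∀ j, H' i j * H' i' j = H i j * H i' j := by
      intro j
      rcases hHpm z j with h | h <;> simp only [hH', h] <;> ring
    rw [Finset.sum_congr rfl fun j _ => hj j]; exact hrowH i i'
  have hcolH' : ∀ j j', ∑ i, H' i j * H' i j' = if j = j' then M else 0 := by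
    intro j j'
    have step : ∀ i, H' i j * H' i j' = H z j * H z j' * (H i j * H i j') := by
      intro i; simp only [hH']; ring
    rw [Finset.sum_congr rfl fun i _ => step i, ← Finset.mul_sum, hcolH]
    by_cases h : j = j'
    · subst h; rw [if_pos rfl]
      rcases hHpm z j with h2 | h2 <;> rw [h2] <;> ring
    · rw [if_neg h, mul_zero]
  have hrowsumH' : ∀ i, i ≠ z → ∑ j, H' i j = 0 := by
    intro i hi
    have h := hrowH' i z
    rw [if_neg hi] at h
    calc ∑ j, H' i j = ∑ j, H' i j * H' z j := by
          refine Finset.sum_congr rfl fun j _ => ?_; rw [hH'z, mul_one]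
      _ = 0 := h
  -- X facts
  have hXnn : ∀ b p, (0:ℝ) ≤ X b p := by
    intro b p; rcases hX01 b p with h | h <;> rw [h] <;> norm_num
  have hXsq : ∀ b p, X b p * X b p = X b p := by
    intro b p; rcases hX01 b p with h | h <;> rw [h] <;> norm_num
  have hXX : ∀ p q, ∑ b, X b p * X b q =
      (if p = q then M else 0) + (if p.1 = q.1 then 0 else 1) := by
    intro p q
    have h := congrFun (congrFun hX3 p) q
    simp only [Matrix.mul_apply, Matrix.transpose_apply, Matrix.add_apply, Matrix.smul_apply,
      Matrix.one_apply, Matrix.kroneckerMap_apply, Matrix.sub_apply, Matrix.of_apply,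
      smul_eq_mul, mul_ite, mul_one, mul_zero] at h
    rw [h]
    by_cases h1 : p = q
    · subst h1; simp
    · by_cases h2 : p.1 = q.1 <;> simp [h1, h2]
  have hsameg : ∀ b g v v', v ≠ v' → X b (g, v) * X b (g, v') = 0 := by
    intro b g v v' hvv'
    have h := hXX (g, v) (g, v')
    rw [if_neg (by simp [hvv']), if_pos rfl, add_zero] at h
    exact (Finset.sum_eq_zero_iff_of_nonneg
      (fun c _ => mul_nonneg (hXnn c (g, v)) (hXnn c (g, v')))).mp h b (Finset.mem_univ b)
  have hgrp : ∀ b g, ∑ v, X b (g, v) = 1 := by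
    intro b g
    have hle : ∀ g' : Fin K, (∑ v, X b (g', v)) ≤ 1 := by
      intro g'
      have hs := sum_mul_sum_orth (fun v => X b (g', v)) (fun _ => 1)
        (fun v => hXsq b (g', v)) (fun v w hvw => hsameg b g' v w hvw)
      simp only [mul_one] at hs
      rcases mul_eq_zero.mp
          (by nlinarith : (∑ v, X b (g', v)) * ((∑ v, X b (g', v)) - 1) = 0) with h1 | h1
      · rw [h1]; norm_num
      · linarith
    have htot : ∑ g' : Fin K, ∑ v, X b (g', v) = (K:ℝ) := by
      rw [← Fintype.sum_prod_type]; exact hX2 b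
    by_contra hne
    have hlt : ∑ g' : Fin K, ∑ v, X b (g', v) < ∑ g' : Fin K, (1:ℝ) :=
      Finset.sum_lt_sum (fun g' _ => hle g')
        ⟨g, Finset.mem_univ g, lt_of_le_of_ne (hle g) hne⟩
    rw [htot, Finset.sum_const, Finset.card_univ, Fintype.card_fin, nsmul_eq_mul,
      mul_one] at hlt
    exact lt_irrefl _ hlt
  -- index machinery
  have h21 : 2 * K - 1 + 1 = 2 * K := by omega
  set es : Fin (2 * K - 1) → Fin (2 * K) := fun i => ⟨i.val + 1, by omega⟩ with hes
  have hesz : ∀ i, es i ≠ z := by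
    intro i h
    have h2 := congrArg Fin.val h
    simp [hes, hz] at h2
  have hesinj : ∀ i i', es i = es i' → i = i' := by
    intro i i' h
    have h2 := congrArg Fin.val h
    simp [hes] at h2
    exact Fin.ext h2
  have hsplit : ∀ f : Fin (2 * K) → ℝ,
      ∑ i : Fin (2 * K - 1), f (es i) = (∑ j, f j) - f z := by
    intro f
    have h1 : ∑ j : Fin (2 * K), f j = ∑ j : Fin (2 * K - 1 + 1), f (finCongr h21 j) :=
      (Fintype.sum_equiv (finCongr h21) _ _ (fun _ => rfl)).symm
    rw [Fin.sum_univ_succ] at h1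
    have h2 : f (finCongr h21 0) = f z := by congr 1
    have h3 : ∀ i : Fin (2 * K - 1), f (finCongr h21 i.succ) = f (es i) := by
      intro i; congr 1
    rw [h2, Finset.sum_congr rfl (fun i _ => h3 i)] at h1
    linarith
  set eB : Fin (4 * K ^ 2) ≃ Fin (2 * K * (2 * K)) := finCongr (by ring) with heB
  set eD := (finProdFinEquiv : Fin K × Fin (2 * K - 1) ≃ Fin (K * (2 * K - 1))) with heD
  set Φ : Matrix (Fin (K * (2 * K - 1))) (Fin (4 * K ^ 2)) ℝ :=
    fun d n => ∑ v, X (eB n) ((eD.symm d).1, v) * H' (es (eD.symm d).2) v with hΦ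
  have hflat : ∀ d n, Φ d n * Φ d n = 1 := by
    intro d n
    simp only [hΦ]
    rw [sum_mul_sum_orth _ _ (fun v => hXsq _ _) (fun v w hvw => hsameg _ _ _ _ hvw)]
    calc ∑ v, X (eB n) ((eD.symm d).1, v) * (H' (es (eD.symm d).2) v * H' (es (eD.symm d).2) v)
        = ∑ v, X (eB n) ((eD.symm d).1, v) := by
          refine Finset.sum_congr rfl fun v _ => ?_; rw [hH'sq, mul_one]
      _ = 1 := hgrp _ _
  -- key computation for rows (tightness)
  have key1 : ∀ (g g' : Fin K) (i i' : Fin (2 * K - 1)),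
      ∑ b, (∑ v, X b (g, v) * H' (es i) v) * (∑ w, X b (g', w) * H' (es i') w)
        = if g = g' ∧ i = i' then M * M else 0 := by
    intro g g' i i'
    rw [rearr (fun b v => X b (g, v)) (fun b w => X b (g', w)) (H' (es i)) (H' (es i'))]
    by_cases hgg : g = g'
    · subst hgg
      have e2 : ∀ v w : Fin (2 * K),
          H' (es i) v * H' (es i') w * (∑ b, X b (g, v) * X b (g, w))
            = if v = w then H' (es i) v * H' (es i') w * M else 0 := by
        intro v w
        rw [hXX (g, v) (g, w)]
        by_cases hvw : v = w
        · subst hvw; simp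
        · have hne : ((g, v) : Fin K × Fin (2 * K)) ≠ (g, w) :=
            fun h => hvw (congrArg Prod.snd h)
          simp [hvw, hne]
      calc ∑ v, ∑ w, H' (es i) v * H' (es i') w * (∑ b, X b (g, v) * X b (g, w))
          = ∑ v, H' (es i) v * H' (es i') v * M := by
            refine Finset.sum_congr rfl fun v _ => ?_
            rw [Finset.sum_congr rfl fun w _ => e2 v w]
            simp [Finset.sum_ite_eq]
        _ = (∑ v, H' (es i) v * H' (es i') v) * M := by rw [← Finset.sum_mul]
        _ = (if es i = es i' then M else 0) * M := by rw [hrowH']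
        _ = if g = g ∧ i = i' then M * M else 0 := by
            by_cases hii : i = i'
            · subst hii; simp
            · rw [if_neg (fun h => hii (hesinj _ _ h)), if_neg (fun h => hii h.2), zero_mul]
    · have e2 : ∀ v w : Fin (2 * K),
          H' (es i) v * H' (es i') w * (∑ b, X b (g, v) * X b (g', w))
            = H' (es i) v * H' (es i') w := by
        intro v w
        rw [hXX (g, v) (g', w)]
        have hne : ((g, v) : Fin K × Fin (2 * K)) ≠ (g', w) :=
          fun h => hgg (congrArg Prod.fst h)
        simp [hne, hgg]
      rw [if_neg (fun h => hgg h.1)]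
      calc ∑ v, ∑ w, H' (es i) v * H' (es i') w * (∑ b, X b (g, v) * X b (g', w))
          = ∑ v, ∑ w, H' (es i) v * H' (es i') w :=
            Finset.sum_congr rfl fun v _ => Finset.sum_congr rfl fun w _ => e2 v w
        _ = (∑ v, H' (es i) v) * (∑ w, H' (es i') w) := (Finset.sum_mul_sum _ _ _ _).symm
        _ = 0 := by rw [hrowsumH' _ (hesz i), zero_mul]
  -- key computation for columns (equiangularity)
  have key2 : ∀ b b' : Fin (2 * K * (2 * K)), b ≠ b' →
      |∑ g : Fin K, ∑ i : Fin (2 * K - 1),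
        (∑ v, X b (g, v) * H' (es i) v) * (∑ w, X b' (g, w) * H' (es i) w)| = (K : ℝ) := by
    intro b b' hbb'
    have hin : ∀ v w : Fin (2 * K),
        (∑ i : Fin (2 * K - 1), H' (es i) v * H' (es i) w) = (if v = w then M else 0) - 1 := by
      intro v w
      rw [hsplit (fun j => H' j v * H' j w), hcolH', hH'z, hH'z, mul_one]
    have step : ∀ g : Fin K,
        ∑ i : Fin (2 * K - 1),
          (∑ v, X b (g, v) * H' (es i) v) * (∑ w, X b' (g, w) * H' (es i) w)
          = M * (∑ v, X b (g, v) * X b' (g, v)) - 1 := by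
      intro g
      rw [rearr2 (fun v => X b (g, v)) (fun w => X b' (g, w))
        (fun i v => H' (es i) v) (fun i w => H' (es i) w)]
      calc ∑ v, ∑ w, X b (g, v) * X b' (g, w) *
              (∑ i : Fin (2 * K - 1), H' (es i) v * H' (es i) w)
          = ∑ v, ∑ w, ((if v = w then X b (g, v) * X b' (g, w) * M else 0)
              - X b (g, v) * X b' (g, w)) := by
            refine Finset.sum_congr rfl fun v _ => Finset.sum_congr rfl fun w _ => ?_
            rw [hin v w]
            by_cases hvw : v = w
            · subst hvw; rw [if_pos rfl, if_pos rfl]; ring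
            · rw [if_neg hvw, if_neg hvw]; ring
        _ = ∑ v, (X b (g, v) * X b' (g, v) * M - X b (g, v) * (∑ w, X b' (g, w))) := by
            refine Finset.sum_congr rfl fun v _ => ?_
            rw [Finset.sum_sub_distrib]
            congr 1
            · simp [Finset.sum_ite_eq]
            · rw [Finset.mul_sum]
        _ = M * (∑ v, X b (g, v) * X b' (g, v)) - 1 := by
            rw [Finset.sum_sub_distrib]
            congr 1
            · rw [← Finset.sum_mul, mul_comm]
            · calc ∑ v, X b (g, v) * (∑ w, X b' (g, w)) = ∑ v, X b (g, v) := by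
                    refine Finset.sum_congr rfl fun v _ => ?_
                    rw [hgrp, mul_one]
                _ = 1 := hgrp b g
    rw [Finset.sum_congr rfl fun g _ => step g, Finset.sum_sub_distrib, ← Finset.mul_sum,
      Finset.sum_const, Finset.card_univ, Fintype.card_fin, nsmul_eq_mul, mul_one]
    have hT01 : (∑ g : Fin K, ∑ v, X b (g, v) * X b' (g, v)) = 0 ∨
        (∑ g : Fin K, ∑ v, X b (g, v) * X b' (g, v)) = 1 := by
      have hTsum : (∑ g : Fin K, ∑ v, X b (g, v) * X b' (g, v))
          = ∑ p : Fin K × Fin (2 * K), X b p * X b' p := by rw [Fintype.sum_prod_type]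
      rw [hTsum]
      have hsq : ∀ p : Fin K × Fin (2 * K),
          (X b p * X b' p) * (X b p * X b' p) = X b p * X b' p := by
        intro p
        rcases hX01 b p with h | h <;> rcases hX01 b' p with h2 | h2 <;> rw [h, h2] <;> norm_num
      have horth : ∀ p q : Fin K × Fin (2 * K), p ≠ q →
          (X b p * X b' p) * (X b q * X b' q) = 0 := by
        rintro ⟨p1, p2⟩ ⟨q1, q2⟩ hpq
        rcases hX01 b (p1, p2) with h1 | h1
        · rw [h1]; ring
        rcases hX01 b' (p1, p2) with h2 | h2
        · rw [h2]; ring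
        rcases hX01 b (q1, q2) with h3 | h3
        · rw [h3]; ring
        rcases hX01 b' (q1, q2) with h4 | h4
        · rw [h4]; ring
        exfalso
        by_cases hg : p1 = q1
        · subst hg
          have hv : p2 ≠ q2 := fun h5 => hpq (by rw [h5])
          have h0 := hsameg b p1 p2 q2 hv
          rw [h1, h3] at h0
          norm_num at h0
        · have hval := hXX (p1, p2) (q1, q2)
          rw [if_neg (fun h => hg (congrArg Prod.fst h)), if_neg hg, zero_add] at hval
          have hsub : ∑ c ∈ ({b, b'} : Finset (Fin (2 * K * (2 * K)))),
              X c (p1, p2) * X c (q1, q2) ≤ ∑ c, X c (p1, p2) * X c (q1, q2) :=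
            Finset.sum_le_sum_of_subset_of_nonneg (Finset.subset_univ _)
              (fun c _ _ => mul_nonneg (hXnn _ _) (hXnn _ _))
          rw [Finset.sum_pair hbb', hval, h1, h2, h3, h4] at hsub
          norm_num at hsub
      have hs := sum_mul_sum_orth (fun p : Fin K × Fin (2 * K) => X b p * X b' p)
        (fun _ => 1) hsq horth
      simp only [mul_one] at hs
      rcases mul_eq_zero.mp (by nlinarith :
          (∑ p : Fin K × Fin (2 * K), X b p * X b' p) *
            ((∑ p : Fin K × Fin (2 * K), X b p * X b' p) - 1) = 0) with h1 | h1
      · exact Or.inl h1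
      · exact Or.inr (by linarith)
    rcases hT01 with h | h <;> rw [h]
    · rw [mul_zero, zero_sub, abs_neg, abs_of_nonneg (by positivity)]
    · rw [mul_one, hMdef]
      push_cast
      rw [show (2 : ℝ) * K - K = K by ring, abs_of_nonneg (by positivity)]
  -- assemble
  refine ⟨Φ, ?_, ?_, ?_, ?_⟩
  · intro d n
    rcases mul_self_eq_one_iff.mp (hflat d n) with h | h <;> rw [h] <;> norm_num
  · refine ⟨((K * (2 * K - 1) : ℕ) : ℝ), ?_, ?_⟩
    · exact_mod_cast Nat.mul_pos (by omega) (by omega : 0 < 2 * K - 1)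
    · intro n
      have e1 : (Φᵀ * Φ) n n = ∑ d, Φ d n * Φ d n := by
        simp [Matrix.mul_apply, Matrix.transpose_apply]
      rw [e1, Finset.sum_congr rfl fun d _ => hflat d n, Finset.sum_const, Finset.card_univ,
        Fintype.card_fin, nsmul_eq_mul, mul_one]
  · refine ⟨M * M, mul_pos hMpos hMpos, ?_⟩
    ext d d'
    have e1 : (Φ * Φᵀ) d d' = ∑ n, Φ d n * Φ d' n := by
      simp [Matrix.mul_apply, Matrix.transpose_apply]
    have e2 : ∑ n, Φ d n * Φ d' n
        = ∑ b, (∑ v, X b ((eD.symm d).1, v) * H' (es (eD.symm d).2) v)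
            * (∑ w, X b ((eD.symm d').1, w) * H' (es (eD.symm d').2) w) :=
      Fintype.sum_equiv eB _ _ (fun n => rfl)
    rw [e1, e2, key1]
    have hiff : d = d' ↔
        ((eD.symm d).1 = (eD.symm d').1 ∧ (eD.symm d).2 = (eD.symm d').2) := by
      rw [← Prod.ext_iff, Equiv.apply_eq_iff_eq]
    by_cases hdd : d = d'
    · rw [if_pos (hiff.mp hdd), hdd, Matrix.smul_apply, Matrix.one_apply_eq, smul_eq_mul,
        mul_one]
    · rw [if_neg (fun h => hdd (hiff.mpr h)), Matrix.smul_apply, Matrix.one_apply_ne hdd,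
        smul_eq_mul, mul_zero]
  · refine ⟨(K : ℝ), ?_⟩
    intro n n' hnn
    have e1 : (Φᵀ * Φ) n n' = ∑ d, Φ d n * Φ d n' := by
      simp [Matrix.mul_apply, Matrix.transpose_apply]
    have e2 : ∑ d, Φ d n * Φ d n'
        = ∑ p : Fin K × Fin (2 * K - 1), Φ (eD p) n * Φ (eD p) n' :=
      (Fintype.sum_equiv eD _ _ (fun p => rfl)).symm
    have e3 : ∑ p : Fin K × Fin (2 * K - 1), Φ (eD p) n * Φ (eD p) n'
        = ∑ g : Fin K, ∑ i : Fin (2 * K - 1),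
            (∑ v, X (eB n) (g, v) * H' (es i) v) * (∑ w, X (eB n') (g, w) * H' (es i) w) := by
      rw [Fintype.sum_prod_type]
      refine Finset.sum_congr rfl fun g _ => Finset.sum_congr rfl fun i _ => ?_
      simp only [hΦ, Equiv.symm_apply_apply]
    rw [e1, e2, e3]
    exact key2 (eB n) (eB n') (fun h => hnn (eB.injective h))
end

section
/- Let K ≥ 2 be an integer. If there exist an incidence matrix of a TD(K+1,2K) and a real Hadamard matrix of size 2K, then there exists a flat real equiangular tight frame ETF(K(2K+1), 4K²): namely 4K² vectors in ℝ^{K(2K+1)}, all of whose coordinates have absolute value one, forming an equiangular tight frame for ℝ^{K(2K+1)}. In particular, one such frame has synthesis matrix Ψ obtained by appending the all-ones row 1ᵀ on top of Φ = (I_{K+1} ⊗ F)·Xᵀ, where X is the TD(K+1,2K) incidence matrix and F is a real Hadamard matrix of size 2K with its all-ones first row removed; this Ψ satisfies Ψ Ψᵀ = 4K²·I and ΨᵀΨ = 2K·X Xᵀ − K·J. -/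
open Matrix

/-- If a `TD(K+1,2K)` and a real Hadamard matrix of size `2K` (normalized to have all-ones
first row) exist, then a flat real `ETF(K(2K+1), 4K²)` exists.  Explicitly, with `F` the
Hadamard matrix with its all-ones first row removed, `Φ = (I_{K+1} ⊗ F) Xᵀ`, and `Ψ` the
matrix `Φ` with an all-ones row appended on top, `Ψ` satisfies `Ψ Ψᵀ = 4K²·I` and
`Ψᵀ Ψ = 2K·X Xᵀ - K·J`, and its columns form a flat real equiangular tight frame. -/
theorem flat_real_etf_from_td' (K : ℕ) (hK : 2 ≤ K)
    (X : Matrix (Fin ((2 * K) * (2 * K))) (Fin (K + 1) × Fin (2 * K)) ℝ)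
    (hX01 : ∀ b v, X b v = 0 ∨ X b v = 1)
    (hXrow : ∀ b, ∑ v, X b v = ((K + 1 : ℕ) : ℝ))
    (hXgram : Xᵀ * X = ((2 * K : ℕ) : ℝ) •
        (1 : Matrix (Fin (K + 1) × Fin (2 * K)) (Fin (K + 1) × Fin (2 * K)) ℝ) +
      Matrix.kroneckerMap (· * ·)
        (Matrix.of (fun _ _ => (1 : ℝ)) - (1 : Matrix (Fin (K + 1)) (Fin (K + 1)) ℝ))
        (Matrix.of (fun _ _ => (1 : ℝ)) : Matrix (Fin (2 * K)) (Fin (2 * K)) ℝ))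
    (H : Matrix (Fin (2 * K)) (Fin (2 * K)) ℝ)
    (hHpm : ∀ i j, H i j = 1 ∨ H i j = -1)
    (hHorth : Hᵀ * H = ((2 * K : ℕ) : ℝ) • 1)
    (hHrow : ∀ j, H ⟨0, by omega⟩ j = 1)
    (F : Matrix (Fin (2 * K - 1)) (Fin (2 * K)) ℝ)
    (hF : ∀ (i : Fin (2 * K - 1)) (j : Fin (2 * K)), F i j = H (Fin.cast (by omega) i.succ) j)
    (Φ : Matrix (Fin (K + 1) × Fin (2 * K - 1)) (Fin ((2 * K) * (2 * K))) ℝ)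
    (hΦ : Φ = Matrix.kroneckerMap (· * ·) (1 : Matrix (Fin (K + 1)) (Fin (K + 1)) ℝ) F * Xᵀ)
    (Ψ : Matrix (Unit ⊕ (Fin (K + 1) × Fin (2 * K - 1))) (Fin ((2 * K) * (2 * K))) ℝ)
    (hΨtop : ∀ j, Ψ (Sum.inl ()) j = 1)
    (hΨbot : ∀ p j, Ψ (Sum.inr p) j = Φ p j) :
    Ψ * Ψᵀ = ((4 * K ^ 2 : ℕ) : ℝ) • 1 ∧
    Ψᵀ * Ψ = ((2 * K : ℕ) : ℝ) • (X * Xᵀ) - (K : ℝ) • (Matrix.of (fun _ _ => (1 : ℝ))) ∧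
    (∀ i j, |Ψ i j| = 1) ∧
    (∃ c : ℝ, 0 < c ∧ ∀ n, (Ψᵀ * Ψ) n n = c) ∧
    (∃ μ : ℝ, ∀ n n', n ≠ n' → |(Ψᵀ * Ψ) n n'| = μ) ∧
    (∃ Φ' : Matrix (Fin (K * (2 * K + 1))) (Fin (4 * K ^ 2)) ℝ,
      (∀ d n, |Φ' d n| = 1) ∧
      (∃ c : ℝ, 0 < c ∧ ∀ n, (Φ'ᵀ * Φ') n n = c) ∧
      (∃ A : ℝ, 0 < A ∧ Φ' * Φ'ᵀ = A • (1 : Matrix (Fin (K * (2 * K + 1))) (Fin (K * (2 * K + 1))) ℝ)) ∧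
      (∃ μ : ℝ, ∀ n n' : Fin (4 * K ^ 2), n ≠ n' → |(Φ'ᵀ * Φ') n n'| = μ)) := by
  -- ====== basic facts about X ======
  have hgram : ∀ (v v' : Fin (K+1)) (j j' : Fin (2*K)),
      (∑ b, X b (v,j) * X b (v',j')) =
      (if (v,j) = (v',j') then ((2*K:ℕ):ℝ) else 0) + (1 - if v = v' then (1:ℝ) else 0) := by
    intro v v' j j'
    have h := congrFun (congrFun hXgram (v,j)) (v',j')
    simpa only [Matrix.mul_apply, Matrix.transpose_apply, Matrix.add_apply, Matrix.smul_apply,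
      Matrix.one_apply, Matrix.kroneckerMap_apply, Matrix.sub_apply, Matrix.of_apply,
      smul_eq_mul, mul_ite, mul_one, mul_zero] using h
  have hXcolort : ∀ (v : Fin (K+1)) (j j' : Fin (2*K)),
      (∑ b, X b (v,j) * X b (v,j')) = if j = j' then ((2*K:ℕ):ℝ) else 0 := by
    intro v j j'
    rw [hgram v v j j', if_pos rfl, sub_self, add_zero]
    by_cases h : j = j'
    · rw [if_pos h, if_pos (by rw [h])]
    · rw [if_neg h, if_neg (by simp [Prod.ext_iff, h])]
  have hlam : ∀ (v v' : Fin (K+1)), v ≠ v' → ∀ (j j' : Fin (2*K)),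
      (∑ b, X b (v,j) * X b (v',j')) = 1 := by
    intro v v' hvv j j'
    rw [hgram v v' j j', if_neg (by simp [Prod.ext_iff, hvv]), if_neg hvv]
    ring
  have hXnn : ∀ b p, (0:ℝ) ≤ X b p := fun b p => by rcases hX01 b p with h | h <;> simp [h]
  have hXsq : ∀ b p, X b p * X b p = X b p := fun b p => by rcases hX01 b p with h | h <;> simp [h]
  have hdisj : ∀ b (v : Fin (K+1)) (j j' : Fin (2*K)), j ≠ j' → X b (v,j) * X b (v,j') = 0 := by
    intro b v j j' hjj
    have h := hXcolort v j j'
    rw [if_neg hjj] at h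
    exact (Finset.sum_eq_zero_iff_of_nonneg
      (fun b _ => mul_nonneg (hXnn b (v,j)) (hXnn b (v,j')))).mp h b (Finset.mem_univ b)
  have hs01 : ∀ b (v : Fin (K+1)), (∑ j, X b (v,j)) = 0 ∨ (∑ j, X b (v,j)) = 1 := by
    intro b v
    have hsq : (∑ j, X b (v,j)) * (∑ j, X b (v,j)) = ∑ j, X b (v,j) := by
      rw [Finset.sum_mul_sum]
      rw [Finset.sum_congr rfl (fun j _ => Finset.sum_eq_single j
        (fun j' _ hne => hdisj b v j j' (fun h => hne h.symm)) (by simp))]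
      exact Finset.sum_congr rfl fun j _ => hXsq b (v,j)
    have h0 : (∑ j, X b (v,j)) * ((∑ j, X b (v,j)) - 1) = 0 := by nlinarith [hsq]
    rcases mul_eq_zero.mp h0 with h | h
    · exact Or.inl h
    · exact Or.inr (by linarith [sub_eq_zero.mp h])
  have hgrp : ∀ b (v : Fin (K+1)), (∑ j, X b (v,j)) = 1 := by
    intro b v
    have htot : ∑ v' : Fin (K+1), (∑ j, X b (v',j)) = ((K+1:ℕ):ℝ) := by
      rw [← Fintype.sum_prod_type]
      exact hXrow b
    have hle : ∀ v' : Fin (K+1), (∑ j, X b (v',j)) ≤ 1 := by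
      intro v'; rcases hs01 b v' with h | h <;> rw [h] <;> norm_num
    by_contra hne
    have hlt : (∑ j, X b (v,j)) < 1 := lt_of_le_of_ne (hle v) hne
    have : ∑ v' : Fin (K+1), (∑ j, X b (v',j)) < ((K+1:ℕ):ℝ) := by
      calc ∑ v' : Fin (K+1), (∑ j, X b (v',j)) < ∑ _v' : Fin (K+1), (1:ℝ) :=
            Finset.sum_lt_sum (fun v' _ => hle v') ⟨v, Finset.mem_univ v, hlt⟩
        _ = ((K+1:ℕ):ℝ) := by simp
    linarith [htot]
  have hj : ∀ b (v : Fin (K+1)), ∃ j, X b (v,j) = 1 ∧ ∀ j', j' ≠ j → X b (v,j') = 0 := by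
    intro b v
    have : ∃ j, X b (v,j) ≠ 0 := by
      by_contra h
      push_neg at h
      have := hgrp b v
      rw [Finset.sum_eq_zero (fun j _ => h j)] at this
      norm_num at this
    obtain ⟨j, hjne⟩ := this
    have hj1 : X b (v,j) = 1 := (hX01 b (v,j)).resolve_left hjne
    refine ⟨j, hj1, fun j' hne => ?_⟩
    have := hdisj b v j' j hne
    rw [hj1, mul_one] at this
    exact this
  choose j₀ hj₀ hj₀' using hj
  have hXite : ∀ b v j, X b (v,j) = if j = j₀ b v then (1:ℝ) else 0 := by
    intro b v j
    by_cases h : j = j₀ b v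
    · rw [if_pos h, h]; exact hj₀ b v
    · rw [if_neg h]; exact hj₀' b v j h
  -- ====== basic facts about H and F ======
  have hMnat : 2 * K - 1 + 1 = 2 * K := by omega
  have hMne : ((2*K:ℕ):ℝ) ≠ 0 := by
    have : 0 < 2*K := by omega
    positivity
  have hHH : H * Hᵀ = ((2*K:ℕ):ℝ) • 1 := by
    have h1 : (((2*K:ℕ):ℝ)⁻¹ • Hᵀ) * H = 1 := by
      rw [Matrix.smul_mul, hHorth, smul_smul, inv_mul_cancel₀ hMne, one_smul]
    have h2 := mul_eq_one_comm.mp h1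
    rw [Matrix.mul_smul] at h2
    calc H * Hᵀ = ((2*K:ℕ):ℝ) • (((2*K:ℕ):ℝ)⁻¹ • (H * Hᵀ)) := by
          rw [smul_smul, mul_inv_cancel₀ hMne, one_smul]
      _ = ((2*K:ℕ):ℝ) • 1 := by rw [h2]
  have hHHe : ∀ r r' : Fin (2*K), (∑ j, H r j * H r' j) = if r = r' then ((2*K:ℕ):ℝ) else 0 := by
    intro r r'
    have h := congrFun (congrFun hHH r) r'
    simpa [Matrix.mul_apply, Matrix.smul_apply, Matrix.one_apply, mul_ite] using h
  have hHHc : ∀ j j' : Fin (2*K), (∑ r, H r j * H r j') = if j = j' then ((2*K:ℕ):ℝ) else 0 := by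
    intro j j'
    have h := congrFun (congrFun hHorth j) j'
    simpa [Matrix.mul_apply, Matrix.smul_apply, Matrix.one_apply, mul_ite] using h
  have hsplit : ∀ f : Fin (2*K) → ℝ,
      (∑ r, f r) = f ⟨0, by omega⟩ + ∑ i : Fin (2*K-1), f (Fin.cast hMnat i.succ) := by
    intro f
    rw [← Equiv.sum_comp (finCongr hMnat) f, Fin.sum_univ_succ]
    rfl
  have hcastne : ∀ i : Fin (2*K-1), (Fin.cast hMnat i.succ) ≠ (⟨0, by omega⟩ : Fin (2*K)) := by
    intro i h
    have := congrArg Fin.val h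
    simp at this
  have hFrowsum : ∀ i, (∑ j, F i j) = 0 := by
    intro i
    have h := hHHe (Fin.cast hMnat i.succ) ⟨0, by omega⟩
    rw [if_neg (hcastne i)] at h
    calc (∑ j, F i j) = ∑ j, H (Fin.cast hMnat i.succ) j * H ⟨0, by omega⟩ j := by
          refine Finset.sum_congr rfl fun j _ => ?_
          rw [hF, hHrow, mul_one]
      _ = 0 := h
  have hFrowort : ∀ i i', (∑ j, F i j * F i' j) = if i = i' then ((2*K:ℕ):ℝ) else 0 := by
    intro i i'
    have h := hHHe (Fin.cast hMnat i.succ) (Fin.cast hMnat i'.succ)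
    have hiff : (Fin.cast hMnat i.succ = Fin.cast hMnat i'.succ) ↔ i = i' := by
      constructor
      · intro hh
        have := congrArg Fin.val hh
        simp at this
        exact Fin.ext this
      · intro hh; rw [hh]
    have hsum : (∑ j, F i j * F i' j)
        = ∑ j, H (Fin.cast hMnat i.succ) j * H (Fin.cast hMnat i'.succ) j :=
      Finset.sum_congr rfl fun j _ => by rw [hF, hF]
    rw [hsum, h]
    by_cases hii : i = i'
    · rw [if_pos hii, if_pos (hiff.mpr hii)]
    · rw [if_neg hii, if_neg (fun hh => hii (hiff.mp hh))]
  have hFcolsum : ∀ j j', (∑ i, F i j * F i j') = (if j = j' then ((2*K:ℕ):ℝ) else 0) - 1 := by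
    intro j j'
    have h := hHHc j j'
    rw [hsplit (fun r => H r j * H r j')] at h
    rw [hHrow j, hHrow j', one_mul] at h
    have : (∑ i : Fin (2*K-1), H (Fin.cast hMnat i.succ) j * H (Fin.cast hMnat i.succ) j')
        = ∑ i : Fin (2*K-1), F i j * F i j' :=
      Finset.sum_congr rfl fun i _ => by rw [hF, hF]
    rw [this] at h
    linarith [h]
  have hFpm : ∀ i j, F i j = 1 ∨ F i j = -1 := fun i j => by rw [hF]; exact hHpm _ _
  -- ====== facts about Φ ======
  have hΦsum : ∀ (v : Fin (K+1)) (i : Fin (2*K-1)) b, Φ (v,i) b = ∑ j, F i j * X b (v,j) := by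
    intro v i b
    rw [hΦ, Matrix.mul_apply, Fintype.sum_prod_type]
    rw [Finset.sum_eq_single v]
    · simp [Matrix.kroneckerMap_apply, Matrix.one_apply, Matrix.transpose_apply]
    · intro v' _ hne
      simp [Matrix.kroneckerMap_apply, Matrix.one_apply, Ne.symm hne]
    · simp
  have hΦe : ∀ (v : Fin (K+1)) (i : Fin (2*K-1)) b, Φ (v,i) b = F i (j₀ b v) := by
    intro v i b
    rw [hΦsum]
    rw [Finset.sum_eq_single (j₀ b v)]
    · rw [hj₀, mul_one]
    · intro j _ hne
      rw [hj₀' b v j hne, mul_zero]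
    · simp
  -- ====== Gram identities ======
  have h1e : ∀ r r' : Unit ⊕ (Fin (K + 1) × Fin (2 * K - 1)),
      (∑ b, Ψ r b * Ψ r' b) = if r = r' then ((4*K^2:ℕ):ℝ) else 0 := by
    have hXcol : ∀ (v : Fin (K+1)) (j : Fin (2*K)), (∑ b, X b (v,j)) = ((2*K:ℕ):ℝ) := by
      intro v j
      have h := hXcolort v j j
      rw [if_pos rfl] at h
      rw [← h]
      exact Finset.sum_congr rfl fun b _ => (hXsq b (v,j)).symm
    have hΦ0 : ∀ (v : Fin (K+1)) (i : Fin (2*K-1)), (∑ b, Φ (v,i) b) = 0 := by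
      intro v i
      calc (∑ b, Φ (v,i) b) = ∑ b, ∑ j, F i j * X b (v,j) :=
            Finset.sum_congr rfl fun b _ => hΦsum v i b
        _ = ∑ j, ∑ b, F i j * X b (v,j) := Finset.sum_comm
        _ = ∑ j, F i j * ((2*K:ℕ):ℝ) := by
            refine Finset.sum_congr rfl fun j _ => ?_
            rw [← Finset.mul_sum, hXcol]
        _ = (∑ j, F i j) * ((2*K:ℕ):ℝ) := by rw [Finset.sum_mul]
        _ = 0 := by rw [hFrowsum, zero_mul]
    have hbot : ∀ (v v' : Fin (K+1)) (i i' : Fin (2*K-1)),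
        (∑ b, Φ (v,i) b * Φ (v',i') b) =
        if (v,i) = (v',i') then ((4*K^2:ℕ):ℝ) else 0 := by
      intro v v' i i'
      have key : (∑ b, Φ (v,i) b * Φ (v',i') b)
          = ∑ j, ∑ j', F i j * F i' j' * ∑ b, X b (v,j) * X b (v',j') := by
        calc (∑ b, Φ (v,i) b * Φ (v',i') b)
            = ∑ b, ∑ j, ∑ j', (F i j * X b (v,j)) * (F i' j' * X b (v',j')) := by
              refine Finset.sum_congr rfl fun b _ => ?_
              rw [hΦsum, hΦsum, Finset.sum_mul_sum]
          _ = ∑ j, ∑ b, ∑ j', (F i j * X b (v,j)) * (F i' j' * X b (v',j')) := Finset.sum_comm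
          _ = ∑ j, ∑ j', ∑ b, (F i j * X b (v,j)) * (F i' j' * X b (v',j')) :=
              Finset.sum_congr rfl fun j _ => Finset.sum_comm
          _ = ∑ j, ∑ j', F i j * F i' j' * ∑ b, X b (v,j) * X b (v',j') := by
              refine Finset.sum_congr rfl fun j _ => Finset.sum_congr rfl fun j' _ => ?_
              rw [Finset.mul_sum]
              exact Finset.sum_congr rfl fun b _ => by ring
      by_cases hvv : v = v'
      · subst hvv
        have : (∑ b, Φ (v,i) b * Φ (v,i') b) = ((2*K:ℕ):ℝ) * ∑ j, F i j * F i' j := by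
          rw [key, Finset.mul_sum]
          refine Finset.sum_congr rfl fun j _ => ?_
          rw [Finset.sum_eq_single j]
          · rw [hXcolort, if_pos rfl]; ring
          · intro j' _ hne
            rw [hXcolort, if_neg (Ne.symm hne), mul_zero]
          · simp
        rw [this, hFrowort]
        by_cases hii : i = i'
        · subst hii
          rw [if_pos rfl, if_pos rfl]
          push_cast
          ring
        · rw [if_neg hii, if_neg (by simp [Prod.ext_iff, hii]), mul_zero]
      · have : (∑ b, Φ (v,i) b * Φ (v',i') b) = (∑ j, F i j) * (∑ j', F i' j') := by
          rw [key, Finset.sum_mul_sum]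
          refine Finset.sum_congr rfl fun j _ => Finset.sum_congr rfl fun j' _ => ?_
          rw [hlam v v' hvv, mul_one]
        rw [this, hFrowsum, zero_mul, if_neg (by simp [Prod.ext_iff, hvv])]
    intro r r'
    match r, r' with
    | Sum.inl _, Sum.inl _ =>
      simp only [hΨtop, one_mul, Finset.sum_const, Finset.card_univ, Fintype.card_fin,
        nsmul_eq_mul, mul_one, if_pos rfl]
      push_cast
      ring
    | Sum.inl _, Sum.inr ⟨v,i⟩ =>
      simp only [hΨtop, hΨbot, one_mul]
      rw [hΦ0 v i, if_neg (by simp)]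
    | Sum.inr ⟨v,i⟩, Sum.inl _ =>
      simp only [hΨtop, hΨbot, mul_one]
      rw [hΦ0 v i, if_neg (by simp)]
    | Sum.inr ⟨v,i⟩, Sum.inr ⟨v',i'⟩ =>
      simp only [hΨbot]
      rw [hbot v v' i i']
      by_cases h : (v,i) = (v',i')
      · rw [if_pos h, if_pos (by rw [h])]
      · rw [if_neg h, if_neg (by simpa using h)]
  have hinner : ∀ b b' : Fin ((2*K)*(2*K)),
      (∑ r, Ψ r b * Ψ r b') =
        ((2*K:ℕ):ℝ) * (∑ v : Fin (K+1), if j₀ b v = j₀ b' v then (1:ℝ) else 0) - (K:ℝ) := by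
    intro b b'
    rw [Fintype.sum_sum_type]
    simp only [Fintype.sum_prod_type, hΨtop, hΨbot, one_mul]
    have h1 : ∀ v : Fin (K+1), (∑ i, Φ (v,i) b * Φ (v,i) b')
        = ((2*K:ℕ):ℝ) * (if j₀ b v = j₀ b' v then (1:ℝ) else 0) - 1 := by
      intro v
      have : (∑ i, Φ (v,i) b * Φ (v,i) b') = ∑ i, F i (j₀ b v) * F i (j₀ b' v) :=
        Finset.sum_congr rfl fun i _ => by rw [hΦe, hΦe]
      rw [this, hFcolsum, mul_ite, mul_one, mul_zero]
    rw [Finset.sum_congr rfl fun v (_ : v ∈ Finset.univ) => h1 v]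
    rw [Finset.sum_sub_distrib, ← Finset.mul_sum]
    simp only [Finset.sum_const, Finset.card_univ, Fintype.card_fin, Fintype.card_unit,
      nsmul_eq_mul, Nat.cast_one, mul_one]
    push_cast
    ring
  have hXXe : ∀ b b', (X * Xᵀ) b b' = ∑ v : Fin (K+1), if j₀ b v = j₀ b' v then (1:ℝ) else 0 := by
    intro b b'
    have hdot : ∀ (v : Fin (K+1)),
        (∑ j, X b (v,j) * X b' (v,j)) = if j₀ b v = j₀ b' v then (1:ℝ) else 0 := by
      intro v
      simp_rw [hXite b v, hXite b' v, ite_mul, one_mul, zero_mul]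
      rw [Finset.sum_ite_eq' Finset.univ (j₀ b v) (fun j => if j = j₀ b' v then (1:ℝ) else 0)]
      simp
    rw [Matrix.mul_apply]
    simp only [Matrix.transpose_apply]
    rw [Fintype.sum_prod_type]
    exact Finset.sum_congr rfl fun v _ => hdot v
  have hΨTΨ : ∀ b b', (Ψᵀ * Ψ) b b' = ∑ r, Ψ r b * Ψ r b' := by
    intro b b'
    rw [Matrix.mul_apply]
    exact Finset.sum_congr rfl fun r _ => by rw [Matrix.transpose_apply]
  -- flatness
  have hflat : ∀ i j, |Ψ i j| = 1 := by
    intro r b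
    match r with
    | Sum.inl _ => rw [hΨtop, abs_one]
    | Sum.inr ⟨v,i⟩ =>
      rw [hΨbot, hΦe]
      rcases hFpm i (j₀ b v) with h | h <;> rw [h] <;> norm_num
  -- the diagonal constant
  have hK2 : (2:ℝ) ≤ (K:ℝ) := by exact_mod_cast hK
  have hdiag : ∀ b, (∑ r, Ψ r b * Ψ r b) = ((2*K:ℕ):ℝ) * ((K:ℝ)+1) - (K:ℝ) := by
    intro b
    rw [hinner b b]
    congr 1
    rw [Finset.sum_congr rfl fun v _ => if_pos rfl]
    simp
  -- off-diagonal values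
  have hoff : ∀ b b', b ≠ b' → |∑ r, Ψ r b * Ψ r b'| = (K:ℝ) := by
    intro b b' hbb
    rw [hinner b b']
    have hcases : (∑ v : Fin (K+1), if j₀ b v = j₀ b' v then (1:ℝ) else 0) = 0 ∨
        (∑ v : Fin (K+1), if j₀ b v = j₀ b' v then (1:ℝ) else 0) = 1 := by
      have huniq : ∀ v v' : Fin (K+1), j₀ b v = j₀ b' v → j₀ b v' = j₀ b' v' → v = v' := by
        intro v v' hv hv'
        by_contra hvv
        have h1 := hlam v v' hvv (j₀ b v) (j₀ b v')
        have h2 : (2:ℝ) ≤ ∑ x, X x (v, j₀ b v) * X x (v', j₀ b v') := by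
          have hpair : (∑ x ∈ ({b, b'} : Finset (Fin ((2*K)*(2*K)))),
              X x (v, j₀ b v) * X x (v', j₀ b v')) = 2 := by
            rw [Finset.sum_pair hbb]
            rw [hj₀ b v, hj₀ b v']
            rw [hv, hv', hj₀ b' v, hj₀ b' v']
            norm_num
          rw [← hpair]
          exact Finset.sum_le_sum_of_subset_of_nonneg (Finset.subset_univ _)
            (fun x _ _ => mul_nonneg (hXnn x _) (hXnn x _))
        rw [h1] at h2
        linarith
      by_cases hex : ∃ v : Fin (K+1), j₀ b v = j₀ b' v
      · obtain ⟨v, hv⟩ := hex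
        right
        rw [Finset.sum_eq_single v]
        · rw [if_pos hv]
        · intro v' _ hne
          rw [if_neg (fun hv' => hne (huniq v' v hv' hv))]
        · simp
      · left
        push_neg at hex
        exact Finset.sum_eq_zero fun v _ => if_neg (hex v)
    rcases hcases with h | h <;> rw [h]
    · rw [mul_zero, zero_sub, abs_neg, abs_of_nonneg (by linarith)]
    · rw [mul_one]
      push_cast
      rw [show (2:ℝ) * (K:ℝ) - (K:ℝ) = (K:ℝ) by ring]
      exact abs_of_nonneg (by linarith)
  -- ====== conclusions ======
  refine ⟨?_, ?_, hflat, ?_, ?_, ?_⟩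
  · -- Ψ * Ψᵀ = 4K² • 1
    ext r r'
    rw [Matrix.mul_apply]
    rw [Finset.sum_congr rfl fun b (_ : b ∈ Finset.univ) => by rw [Matrix.transpose_apply]]
    rw [h1e r r']
    simp [Matrix.smul_apply, Matrix.one_apply, mul_ite]
  · -- Ψᵀ * Ψ = 2K • X Xᵀ - K • J
    ext b b'
    rw [hΨTΨ b b', hinner b b']
    simp only [Matrix.sub_apply, Matrix.smul_apply, Matrix.of_apply, smul_eq_mul, mul_one]
    rw [hXXe b b']
  · -- constant diagonal
    refine ⟨((2*K:ℕ):ℝ) * ((K:ℝ)+1) - (K:ℝ), by push_cast; nlinarith, fun n => ?_⟩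
    rw [hΨTΨ n n, hdiag n]
  · -- equiangularity
    refine ⟨(K:ℝ), fun n n' hne => ?_⟩
    rw [hΨTΨ n n']
    exact hoff n n' hne
  · -- the reindexed flat ETF
    have hcard : Fintype.card (Unit ⊕ (Fin (K + 1) × Fin (2 * K - 1))) = K * (2 * K + 1) := by
      simp only [Fintype.card_sum, Fintype.card_prod, Fintype.card_fin, Fintype.card_unit]
      zify [show (1:ℕ) ≤ 2*K by omega]
      ring
    have hcard2 : (2*K) * (2*K) = 4*K^2 := by ring
    let e₁ : (Unit ⊕ (Fin (K + 1) × Fin (2 * K - 1))) ≃ Fin (K * (2 * K + 1)) :=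
      Fintype.equivFinOfCardEq hcard
    let e₂ : Fin ((2*K)*(2*K)) ≃ Fin (4*K^2) := finCongr hcard2
    refine ⟨Matrix.of fun d n => Ψ (e₁.symm d) (e₂.symm n), fun d n => hflat _ _, ?_, ?_, ?_⟩
    · refine ⟨((2*K:ℕ):ℝ) * ((K:ℝ)+1) - (K:ℝ), by push_cast; nlinarith, fun n => ?_⟩
      rw [Matrix.mul_apply]
      simp only [Matrix.transpose_apply, Matrix.of_apply]
      rw [Equiv.sum_comp e₁.symm (fun r => Ψ r (e₂.symm n) * Ψ r (e₂.symm n))]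
      exact hdiag (e₂.symm n)
    · refine ⟨((4*K^2:ℕ):ℝ), by push_cast; nlinarith, ?_⟩
      ext d d'
      rw [Matrix.mul_apply]
      simp only [Matrix.transpose_apply, Matrix.of_apply]
      rw [Equiv.sum_comp e₂.symm (fun b => Ψ (e₁.symm d) b * Ψ (e₁.symm d') b)]
      rw [h1e (e₁.symm d) (e₁.symm d')]
      simp only [Matrix.smul_apply, Matrix.one_apply, smul_eq_mul, mul_ite, mul_one, mul_zero]
      by_cases h : d = d'
      · rw [if_pos (by rw [h]), if_pos h]
      · rw [if_neg (fun hh => h (e₁.symm.injective hh)), if_neg h]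
    · refine ⟨(K:ℝ), fun n n' hne => ?_⟩
      rw [Matrix.mul_apply]
      simp only [Matrix.transpose_apply, Matrix.of_apply]
      rw [Equiv.sum_comp e₁.symm (fun r => Ψ r (e₂.symm n) * Ψ r (e₂.symm n'))]
      exact hoff _ _ (fun hh => hne (e₂.symm.injective hh))
end

section
/- Let D > 1 be an integer. If the pair (D, D+1) is of type (K,−1,S) for some integers K and S, then either D = 2 with (K,S) = (3,2), or D = 3 with (K,S) = (2,3). Conversely, (2,3) is of type (3,−1,2) and (3,4) is of type (2,−1,3). -/
/-- The pair `(D,N)` is of type `(K,L,S)`: `K` and `S` are positive integers, `L = ±1`,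
`D·K = S·(S(K-1)+L)` and `N = (S+L)·(S(K-1)+L)`. -/
def IsTypeKLS (D N K L S : ℤ) : Prop :=
  0 < K ∧ 0 < S ∧ (L = 1 ∨ L = -1) ∧
  D * K = S * (S * (K - 1) + L) ∧ N = (S + L) * (S * (K - 1) + L)

/-- If `D > 1` and `(D, D+1)` is of type `(K,-1,S)` then either `D = 2` with
`(K,S) = (3,2)`, or `D = 3` with `(K,S) = (2,3)`.  Conversely, `(2,3)` is of type
`(3,-1,2)` and `(3,4)` is of type `(2,-1,3)`. -/
theorem type_neg_regular_simplex (D : ℤ) (hD : 1 < D) :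
    (∀ K S : ℤ, IsTypeKLS D (D + 1) K (-1) S →
      (D = 2 ∧ K = 3 ∧ S = 2) ∨ (D = 3 ∧ K = 2 ∧ S = 3)) ∧
    IsTypeKLS 2 3 3 (-1) 2 ∧ IsTypeKLS 3 4 2 (-1) 3 := by
  refine ⟨?_, ⟨by norm_num, by norm_num, Or.inr rfl, by ring, by ring⟩,
    ⟨by norm_num, by norm_num, Or.inr rfl, by ring, by ring⟩⟩
  rintro K S ⟨hK, hS, -, h1, h2⟩
  have hS2 : 2 ≤ S := by
    rcases (by omega : S = 1 ∨ 2 ≤ S) with h | h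
    · subst h; simp at h2; omega
    · exact h
  have hMpos : 0 < S * (K - 1) + -1 := by nlinarith
  have key : (S * (K - 1) + -1) * (K * (S - 1) - S) = K := by
    linear_combination h1 - K * h2
  have htpos : 0 < K * (S - 1) - S := by
    by_contra h
    push_neg at h
    nlinarith
  have hMK : S * (K - 1) + -1 ≤ K := by nlinarith
  have hK2 : 2 ≤ K := by nlinarith
  have hK3 : K ≤ 3 := by nlinarith
  have hS4 : S ≤ 4 := by nlinarith
  interval_cases K <;> interval_cases S <;> omega
end
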